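/- arXiv:2012.01215 — 7 statements merged into one kernel-verified Lean document; each statement's English description precedes it below -/
import Mathlib

section
/- δ̃(n) > 0 if and only if there exists x ∈ ℝ_{++}^n with F̃(x) = 0; moreover, F̃ has at most one zero in ℝ_{++}^n. -/
/-!
For `x` with `x_{n+1} = 0`, the equations `F̃_k(x) = 0`, `k = n, …, 2`, form a downward
three-term recurrence: a solution is determined by `x_n`, and is positive when `x_n > 0`.
Splitting `A_1^{m+2}` according to whether `m + 2` is fixed or swapped with `m + 1` gives the
continuant recursion `S_1^{m+2} = ã_{m+2,m+2} S_1^{m+1} + ã_{m+1,m+2} ã_{m+2,m+1} S_1^m`, and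
eliminating along the recurrence yields `δ̃(n) - S_1^n x_n = (∏_{l=2}^n ã_{l,l-1}) F̃_1(x)`.
As `S_1^n > 0`, the remaining equation `F̃_1 = 0` holds exactly when `x_n = δ̃(n) / S_1^n`,
which gives both the criterion and uniqueness.
-/

/-- The set `A_a^b` of involutive permutations of `ℕ` that fix every point outside
`{a, …, b}` and move every point by at most one (products of disjoint transpositions
of the form `(i i+1)` supported in `{a, …, b}`). -/
def Aset (a b : ℕ) : Set (Equiv.Perm ℕ) :=
  {σ | σ * σ = 1 ∧ (∀ j, j ∉ Finset.Icc a b → σ j = j) ∧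
    ∀ j, |((σ j : ℤ)) - (j : ℤ)| ≤ 1}

/-- `S_a^b = Σ_{σ ∈ A_a^b} Π_{j=a}^{b} ã_{j,σ(j)}` (equal to `1` when `a > b`). -/
noncomputable def Ssum (ta : ℕ → ℕ → ℝ) (a b : ℕ) : ℝ :=
  ∑ᶠ σ ∈ Aset a b, ∏ j ∈ Finset.Icc a b, ta j (σ j)

/-- `δ̃(m) = ã_{10} Π_{j=2}^{m} ã_{j,j−1} − Σ_{k=2}^{m} ã_{k0} (Π_{l=k+1}^{m} ã_{l,l−1}) S_1^{k−1}`. -/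
noncomputable def deltaT (ta : ℕ → ℕ → ℝ) (m : ℕ) : ℝ :=
  ta 1 0 * ∏ j ∈ Finset.Icc 2 m, ta j (j - 1) -
    ∑ k ∈ Finset.Icc 2 m, ta k 0 * (∏ l ∈ Finset.Icc (k + 1) m, ta l (l - 1)) * Ssum ta 1 (k - 1)

/-- The drift field `F̃` of the Lotka–Volterra food chain (components indexed by `1 ≤ i ≤ n`). -/
def Ft (n : ℕ) (ta : ℕ → ℕ → ℝ) (x : ℕ → ℝ) (i : ℕ) : ℝ :=
  if i = 1 then ta 1 0 - ta 1 1 * x 1 - ta 1 2 * x 2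
  else if i = n then -ta n 0 + ta n (n - 1) * x (n - 1) - ta n n * x n
  else -ta i 0 + ta i (i - 1) * x (i - 1) - ta i i * x i - ta i (i + 1) * x (i + 1)

open Finset

theorem Equiv.Perm.mul_swap_mul_self_eq_one {α : Type*} [DecidableEq α] {σ : Equiv.Perm α}
    {p q : α} (hσ : σ * σ = 1) (hpq : Equiv.swap (σ p) (σ q) = Equiv.swap p q) :
    σ * Equiv.swap p q * (σ * Equiv.swap p q) = 1 := by
  have hcomm : Equiv.swap p q * σ = σ * Equiv.swap p q := by
    rw [Equiv.mul_swap_eq_swap_mul, hpq]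
  rw [mul_assoc, ← mul_assoc (Equiv.swap p q), hcomm, Equiv.mul_swap_mul_self, hσ]

namespace Aset

variable {a b d : ℕ} {σ : Equiv.Perm ℕ}

theorem one_mem (a b : ℕ) : (1 : Equiv.Perm ℕ) ∈ Aset a b :=
  ⟨one_mul 1, fun _ _ => rfl, fun j => by simp⟩

theorem apply_apply (hσ : σ ∈ Aset a b) (j : ℕ) : σ (σ j) = j := by
  simpa using congrArg (· j) hσ.1

theorem eq_singleton_one (h : b ≤ a) : Aset a b = {1} := by
  refine Set.eq_singleton_iff_unique_mem.2 ⟨one_mem a b, fun σ hσ => Equiv.ext fun j => ?_⟩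
  rw [Equiv.Perm.one_apply]
  by_contra hj
  have hjab : j ∈ Icc a b := by_contra fun hj' => hj (hσ.2.1 j hj')
  have hσj : σ j ∉ Icc a b := by simp only [mem_Icc] at hjab ⊢; omega
  exact hj ((hσ.2.1 _ hσj).symm.trans (apply_apply hσ j))

theorem mono (h : b ≤ d) : Aset a b ⊆ Aset a d :=
  fun _ hσ => ⟨hσ.1, fun j hj => hσ.2.1 j (by simp only [mem_Icc] at hj ⊢; omega), hσ.2.2⟩

theorem finite (a b : ℕ) : (Aset a b).Finite := by
  refine (Set.finite_range (Equiv.Perm.ofSubtype (p := (· ∈ Icc a b)))).subset fun σ hσ => ?_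
  have hfix : ∀ j, j ∉ Icc a b → σ j = j := hσ.2.1
  refine ⟨σ.subtypePerm fun j => ⟨fun h => ?_, fun h => ?_⟩, Equiv.Perm.ofSubtype_subtypePerm _
    fun j hj => by_contra fun h => hj (hfix j h)⟩
  · by_contra hj
    exact hj (hfix j hj ▸ h)
  · by_contra hj
    have := hfix _ hj
    rw [apply_apply hσ] at this
    exact hj (this ▸ h)

theorem apply_succ_eq (hσ : σ ∈ Aset a (b + 1)) : σ (b + 1) = b + 1 ∨ σ (b + 1) = b := by
  have hmove := abs_le.1 (hσ.2.2 (b + 1))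
  have hnext : σ (b + 2) = b + 2 := hσ.2.1 _ (by simp)
  have : σ (b + 1) ≠ b + 2 := fun h => by
    have := apply_apply hσ (b + 1)
    rw [h, hnext] at this
    omega
  omega

theorem of_apply_eq_self (hσ : σ ∈ Aset a (b + 1)) (h : σ (b + 1) = b + 1) : σ ∈ Aset a b := by
  refine ⟨hσ.1, fun j hj => ?_, hσ.2.2⟩
  rcases eq_or_ne j (b + 1) with rfl | hjb
  · exact h
  · exact hσ.2.1 j (by simp only [mem_Icc] at hj ⊢; omega)

theorem mul_swap_mem_of_apply_eq (hσ : σ ∈ Aset a (d + 2)) (h : σ (d + 2) = d + 1) :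
    σ * Equiv.swap (d + 1) (d + 2) ∈ Aset a d := by
  have h' : σ (d + 1) = d + 2 := by rw [← h, apply_apply hσ]
  refine ⟨Equiv.Perm.mul_swap_mul_self_eq_one hσ.1 (by rw [h, h', Equiv.swap_comm]), fun j hj => ?_,
    fun j => ?_⟩ <;>
  simp only [Equiv.Perm.mul_apply, Equiv.swap_apply_def] <;> split_ifs with h1 h2
  · rw [h, h1]
  · rw [h', h2]
  · exact hσ.2.1 j (by simp only [mem_Icc] at hj ⊢; omega)
  · simp [h, h1]
  · simp [h', h2]
  · exact hσ.2.2 j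

theorem mul_swap_mem (had : a ≤ d + 1) (hσ : σ ∈ Aset a d) :
    σ * Equiv.swap (d + 1) (d + 2) ∈ Aset a (d + 2) := by
  have h1 : σ (d + 1) = d + 1 := hσ.2.1 _ (by simp)
  have h2 : σ (d + 2) = d + 2 := hσ.2.1 _ (by simp)
  refine ⟨Equiv.Perm.mul_swap_mul_self_eq_one hσ.1 (by rw [h1, h2]), fun j hj => ?_,
    fun j => ?_⟩ <;>
  simp only [Equiv.Perm.mul_apply, Equiv.swap_apply_def] <;> split_ifs with hj1 hj2
  · simp only [mem_Icc] at hj; omega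
  · simp only [mem_Icc] at hj; omega
  · exact hσ.2.1 j (by simp only [mem_Icc] at hj ⊢; omega)
  · simp [h2, hj1]
  · simp [h1, hj2]
  · exact hσ.2.2 j

theorem add_two_eq (had : a ≤ d + 1) :
    Aset a (d + 2) = Aset a (d + 1) ∪ (· * Equiv.swap (d + 1) (d + 2)) '' Aset a d := by
  ext σ
  refine ⟨fun hσ => ?_, ?_⟩
  · rcases apply_succ_eq hσ with h | h
    · exact Or.inl (of_apply_eq_self hσ h)
    · exact Or.inr ⟨_, mul_swap_mem_of_apply_eq hσ h, Equiv.mul_swap_mul_self _ _ σ⟩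
  · rintro (hσ | ⟨τ, hτ, rfl⟩)
    · exact mono (Nat.le_succ _) hσ
    · exact mul_swap_mem had hτ

end Aset

section Ssum

variable (ta : ℕ → ℕ → ℝ)

theorem Ssum_eq_one {a b : ℕ} (h : b < a) : Ssum ta a b = 1 := by
  rw [Ssum, Aset.eq_singleton_one h.le, finsum_mem_singleton, Icc_eq_empty (by omega),
    prod_empty]

theorem Ssum_self (a : ℕ) : Ssum ta a a = ta a a := by
  simp [Ssum, Aset.eq_singleton_one le_rfl]

theorem Ssum_add_two {a d : ℕ} (had : a ≤ d + 1) :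
    Ssum ta a (d + 2) = ta (d + 2) (d + 2) * Ssum ta a (d + 1)
      + ta (d + 1) (d + 2) * ta (d + 2) (d + 1) * Ssum ta a d := by
  set s := Equiv.swap (d + 1) (d + 2)
  have hdisj : Disjoint (Aset a (d + 1)) ((· * s) '' Aset a d) := by
    rw [Set.disjoint_left]
    rintro _ hσ ⟨τ, hτ, rfl⟩
    have h1 : τ (d + 1) = d + 1 := hτ.2.1 _ (by simp)
    have h2 := hσ.2.1 (d + 2) (by simp)
    simp [s, h1] at h2
  rw [Ssum, Aset.add_two_eq had, finsum_mem_union hdisj (Aset.finite _ _)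
    ((Aset.finite _ _).image _), finsum_mem_image (mul_left_injective s).injOn, Ssum, Ssum,
    mul_finsum_mem, mul_finsum_mem]
  congr 1
  · refine finsum_mem_congr rfl fun σ hσ => ?_
    rw [prod_Icc_succ_top (by omega : a ≤ d + 1 + 1), hσ.2.1 (d + 2) (by simp)]
    ring
  · refine finsum_mem_congr rfl fun τ hτ => ?_
    have hs : ∀ j ∈ Icc a d, (τ * s) j = τ j := fun j hj => by
      simp only [mem_Icc] at hj
      simp [s, Equiv.swap_apply_of_ne_of_ne (show j ≠ d + 1 by omega) (show j ≠ d + 2 by omega)]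
    rw [prod_Icc_succ_top (by omega : a ≤ d + 1 + 1), prod_Icc_succ_top (by omega : a ≤ d + 1),
      prod_congr rfl fun j hj => congrArg (ta j) (hs j hj)]
    simp only [s, Equiv.Perm.mul_apply, Equiv.swap_apply_left, Equiv.swap_apply_right,
      hτ.2.1 (d + 1) (by simp), hτ.2.1 (d + 2) (by simp)]
    ring

theorem Ssum_one_pos {m : ℕ} (h11 : 0 < ta 1 1) (hdiag : ∀ j, 2 ≤ j → j ≤ m → 0 ≤ ta j j)
    (hoff : ∀ j, 1 ≤ j → j < m → 0 < ta j (j + 1) * ta (j + 1) j) : 0 < Ssum ta 1 m := by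
  induction m using Nat.strong_induction_on with
  | _ m ih =>
    match m with
    | 0 => rw [Ssum_eq_one ta one_pos]; exact one_pos
    | 1 => rwa [Ssum_self]
    | d + 2 =>
      have ih' : ∀ k < d + 2, 0 < Ssum ta 1 k := fun k hk =>
        ih k hk (fun j hj hjk => hdiag j hj (by omega)) (fun j hj hjk => hoff j hj (by omega))
      rw [Ssum_add_two ta (by omega)]
      have := hdiag (d + 2) (by omega) le_rfl
      have := hoff (d + 1) (by omega) (by omega)
      have := ih' (d + 1) (by omega)
      have := ih' d (by omega)
      positivity

end Ssum

theorem deltaT_succ (ta : ℕ → ℕ → ℝ) {m : ℕ} (hm : 1 ≤ m) :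
    deltaT ta (m + 1) = ta (m + 1) m * deltaT ta m - ta (m + 1) 0 * Ssum ta 1 m := by
  have hprod : ∀ k ∈ Icc 2 m, ∏ l ∈ Icc (k + 1) (m + 1), ta l (l - 1)
      = (∏ l ∈ Icc (k + 1) m, ta l (l - 1)) * ta (m + 1) m := fun k hk => by
    rw [prod_Icc_succ_top (by simp only [mem_Icc] at hk; omega), Nat.add_sub_cancel]
  rw [deltaT, deltaT, prod_Icc_succ_top (by omega), sum_Icc_succ_top (by omega),
    Icc_eq_empty_of_lt (Nat.lt_succ_self _), prod_empty, Nat.add_sub_cancel,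
    sum_congr rfl fun k hk => by rw [hprod k hk], mul_sub, mul_sum]
  ring_nf

section Chain

variable {ta : ℕ → ℕ → ℝ}

/-- `F̃_k(x) = 0` for `2 ≤ k ≤ m`, always with the `x_{k+1}` term, which `F̃_n` lacks: for
`k = n` this is `F̃_n(x) = 0` only when `x (n + 1) = 0`. -/
def SolvesChain (ta : ℕ → ℕ → ℝ) (m : ℕ) (x : ℕ → ℝ) : Prop :=
  ∀ k, 2 ≤ k → k ≤ m → ta k (k - 1) * x (k - 1) = ta k 0 + ta k k * x k + ta k (k + 1) * x (k + 1)

theorem deltaT_sub_eq {x : ℕ → ℝ} {m : ℕ} (hx : SolvesChain ta (m + 1) x) :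
    deltaT ta (m + 1) - Ssum ta 1 (m + 1) * x (m + 1) - Ssum ta 1 m * ta (m + 1) (m + 2) * x (m + 2)
      = (∏ l ∈ Icc 2 (m + 1), ta l (l - 1)) * (ta 1 0 - ta 1 1 * x 1 - ta 1 2 * x 2) := by
  induction m with
  | zero => simp [deltaT, Ssum_self, Ssum_eq_one]
  | succ m ih =>
    have hk := hx (m + 2) (by omega) le_rfl
    simp only [show m + 2 - 1 = m + 1 by omega] at hk
    have ih' := ih fun k hk2 hkm => hx k hk2 (by omega)
    rw [deltaT_succ ta (by omega), Ssum_add_two ta (by omega), prod_Icc_succ_top (by omega)]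
    simp only [Nat.add_sub_cancel]
    linear_combination ta (m + 2) (m + 1) * ih' + Ssum ta 1 (m + 1) * hk

end Chain

section Ft

variable {ta : ℕ → ℕ → ℝ} {n : ℕ}

theorem Ft_update_eq (hn : 2 ≤ n) {i : ℕ} (hi : i ≤ n) (x : ℕ → ℝ) :
    Ft n ta (Function.update x (n + 1) 0) i = Ft n ta x i := by
  unfold Ft
  split_ifs <;> simp (disch := omega) only [Function.update_of_ne]

theorem solvesChain_iff {x : ℕ → ℝ} (hx : x (n + 1) = 0) :
    SolvesChain ta n x ↔ ∀ i, 2 ≤ i → i ≤ n → Ft n ta x i = 0 := by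
  refine forall₂_congr fun i hi => forall_congr' fun hin => ?_
  rw [Ft, if_neg (by omega)]
  split_ifs with hn
  · subst hn
    rw [hx]
    constructor <;> intro h <;> linarith
  · constructor <;> intro h <;> linarith

theorem solvesChain_update (hn : 2 ≤ n) {x : ℕ → ℝ}
    (hx : ∀ i, 2 ≤ i → i ≤ n → Ft n ta x i = 0) :
    SolvesChain ta n (Function.update x (n + 1) 0) :=
  (solvesChain_iff (Function.update_self _ _ _)).2 fun i h2 hi =>
    (Ft_update_eq hn hi x).trans (hx i h2 hi)

theorem deltaT_sub_mul_eq (hn : 2 ≤ n) {x : ℕ → ℝ}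
    (hx : ∀ i, 2 ≤ i → i ≤ n → Ft n ta x i = 0) :
    deltaT ta n - Ssum ta 1 n * x n = (∏ l ∈ Icc 2 n, ta l (l - 1)) * Ft n ta x 1 := by
  obtain ⟨m, rfl⟩ : ∃ m, n = m + 1 := ⟨n - 1, by omega⟩
  have h := deltaT_sub_eq (solvesChain_update hn hx)
  simp only [Function.update_self, Function.update_of_ne (show m + 1 ≠ m + 2 by omega),
    Function.update_of_ne (show 1 ≠ m + 2 by omega),
    Function.update_of_ne (show 2 ≠ m + 2 by omega), mul_zero, sub_zero] at h
  rwa [Ft, if_pos rfl]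

theorem SolvesChain.eq_of_apply_eq (hlow : ∀ k, 2 ≤ k → k ≤ n → ta k (k - 1) ≠ 0)
    {x y : ℕ → ℝ} (hx : SolvesChain ta n x) (hy : SolvesChain ta n y) (hxy : x n = y n)
    (hxy' : x (n + 1) = y (n + 1)) {i : ℕ} (hi1 : 1 ≤ i) (hin : i ≤ n) : x i = y i := by
  suffices x i = y i ∧ x (i + 1) = y (i + 1) from this.1
  induction hin using Nat.decreasingInduction with
  | self => exact ⟨hxy, hxy'⟩
  | of_succ k hk ih =>
    obtain ⟨h1, h2⟩ := ih (by omega)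
    have ex := hx (k + 1) (by omega) (by omega)
    have ey := hy (k + 1) (by omega) (by omega)
    rw [Nat.add_sub_cancel, h1, h2] at ex
    rw [Nat.add_sub_cancel] at ey
    refine ⟨mul_left_cancel₀ ?_ (ex.trans ey.symm), h1⟩
    simpa using hlow (k + 1) (by omega) (by omega)

theorem eq_of_Ft_eq_zero (hn : 2 ≤ n) (hlow : ∀ k, 2 ≤ k → k ≤ n → ta k (k - 1) ≠ 0)
    {x y : ℕ → ℝ} (hx : ∀ i, 2 ≤ i → i ≤ n → Ft n ta x i = 0)
    (hy : ∀ i, 2 ≤ i → i ≤ n → Ft n ta y i = 0) (hxy : x n = y n) {i : ℕ} (hi1 : 1 ≤ i)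
    (hin : i ≤ n) : x i = y i := by
  have h := (solvesChain_update hn hx).eq_of_apply_eq hlow (solvesChain_update hn hy)
    (by simpa using hxy) (by simp) hi1 hin
  rwa [Function.update_of_ne (by omega), Function.update_of_ne (by omega)] at h

end Ft

section BackSub

variable {ta : ℕ → ℕ → ℝ} {n : ℕ} {t : ℝ}

noncomputable def backSub (ta : ℕ → ℕ → ℝ) (n : ℕ) (t : ℝ) (i : ℕ) : ℝ :=
  if n ≤ i then (if i = n then t else 0) else
    (ta (i + 1) 0 + ta (i + 1) (i + 1) * backSub ta n t (i + 1)
      + ta (i + 1) (i + 2) * backSub ta n t (i + 2)) / ta (i + 1) i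
termination_by n - i

theorem backSub_self : backSub ta n t n = t := by
  rw [backSub]; simp

theorem backSub_succ : backSub ta n t (n + 1) = 0 := by
  rw [backSub]; simp

theorem backSub_of_lt {i : ℕ} (hi : i < n) :
    backSub ta n t i = (ta (i + 1) 0 + ta (i + 1) (i + 1) * backSub ta n t (i + 1)
      + ta (i + 1) (i + 2) * backSub ta n t (i + 2)) / ta (i + 1) i := by
  rw [backSub, if_neg (by omega)]

theorem solvesChain_backSub (hlow : ∀ k, 2 ≤ k → k ≤ n → ta k (k - 1) ≠ 0) :
    SolvesChain ta n (backSub ta n t) := by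
  intro k hk hkn
  obtain ⟨i, rfl⟩ : ∃ i, k = i + 1 := ⟨k - 1, by omega⟩
  rw [Nat.add_sub_cancel, backSub_of_lt (by omega),
    mul_div_cancel₀ _ (by simpa using hlow _ hk hkn)]

theorem backSub_pos (ht : 0 < t) (hi0 : ∀ i, 2 ≤ i → i ≤ n → 0 < ta i 0)
    (hii : ∀ i, 2 ≤ i → i ≤ n → 0 ≤ ta i i) (hlow : ∀ i, 2 ≤ i → i ≤ n → 0 < ta i (i - 1))
    (hup : ∀ i, 1 ≤ i → i ≤ n - 1 → 0 < ta i (i + 1)) {i : ℕ} (hi1 : 1 ≤ i) (hin : i ≤ n) :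
    0 < backSub ta n t i := by
  suffices 0 < backSub ta n t i ∧ 0 ≤ ta i (i + 1) * backSub ta n t (i + 1) from this.1
  induction hin using Nat.decreasingInduction with
  | self => simp [backSub_self, backSub_succ, ht]
  | of_succ k hk ih =>
    obtain ⟨hpos, hnext⟩ := ih (by omega)
    have hpos' : 0 < backSub ta n t k := by
      rw [backSub_of_lt hk]
      have := hi0 (k + 1) (by omega) (by omega)
      have := hii (k + 1) (by omega) (by omega)
      have := hlow (k + 1) (by omega) (by omega)
      simp only [Nat.add_sub_cancel] at this
      positivity
    exact ⟨hpos', (mul_pos (hup k hi1 (by omega)) hpos).le⟩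

end BackSub

/-- `δ̃(n) > 0` iff `F̃` has a zero in `ℝ_{++}^n`; moreover `F̃` has at most one zero
in `ℝ_{++}^n`. -/
theorem stmt0 (n : ℕ) (hn : 2 ≤ n) (ta : ℕ → ℕ → ℝ)
    (hi0 : ∀ i, 2 ≤ i → i ≤ n → 0 < ta i 0)
    (h11 : 0 < ta 1 1)
    (hii : ∀ i, 2 ≤ i → i ≤ n → 0 ≤ ta i i)
    (hlow : ∀ i, 2 ≤ i → i ≤ n → 0 < ta i (i - 1))
    (hup : ∀ i, 1 ≤ i → i ≤ n - 1 → 0 < ta i (i + 1)) :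
    (0 < deltaT ta n ↔
      ∃ x : ℕ → ℝ, (∀ i, 1 ≤ i → i ≤ n → 0 < x i) ∧
        ∀ i, 1 ≤ i → i ≤ n → Ft n ta x i = 0) ∧
    (∀ x y : ℕ → ℝ,
      (∀ i, 1 ≤ i → i ≤ n → 0 < x i) → (∀ i, 1 ≤ i → i ≤ n → Ft n ta x i = 0) →
      (∀ i, 1 ≤ i → i ≤ n → 0 < y i) → (∀ i, 1 ≤ i → i ≤ n → Ft n ta y i = 0) →
      ∀ i, 1 ≤ i → i ≤ n → x i = y i) := by
  have hlow' : ∀ k, 2 ≤ k → k ≤ n → ta k (k - 1) ≠ 0 := fun k hk hkn => (hlow k hk hkn).ne'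
  have hS : 0 < Ssum ta 1 n := Ssum_one_pos ta h11 hii fun j hj hjn =>
    mul_pos (hup j hj (by omega)) (by simpa using hlow (j + 1) (by omega) (by omega))
  have hP : 0 < ∏ l ∈ Icc 2 n, ta l (l - 1) :=
    prod_pos fun l hl => hlow l (mem_Icc.1 hl).1 (mem_Icc.1 hl).2
  have hδ (x : ℕ → ℝ) (hx : ∀ i, 1 ≤ i → i ≤ n → Ft n ta x i = 0) :
      deltaT ta n = Ssum ta 1 n * x n := by
    have h := deltaT_sub_mul_eq hn fun i hi hin => hx i (by omega) hin
    rwa [hx 1 le_rfl (by omega), mul_zero, sub_eq_zero] at h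
  refine ⟨⟨fun hpos => ?_, fun ⟨x, hxpos, hx⟩ => ?_⟩, fun x y _ hx _ hy => ?_⟩
  · set x := backSub ta n (deltaT ta n / Ssum ta 1 n)
    have hx : ∀ i, 2 ≤ i → i ≤ n → Ft n ta x i = 0 :=
      (solvesChain_iff backSub_succ).1 (solvesChain_backSub hlow')
    refine ⟨x, fun i hi hin => backSub_pos (div_pos hpos hS) hi0 hii hlow hup hi hin,
      fun i hi hin => ?_⟩
    rcases (show i = 1 ∨ 2 ≤ i by omega) with rfl | hi
    · have h := deltaT_sub_mul_eq hn hx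
      rw [show x n = deltaT ta n / Ssum ta 1 n from backSub_self, mul_div_cancel₀ _ hS.ne',
        sub_self] at h
      exact (mul_eq_zero.1 h.symm).resolve_left hP.ne'
    · exact hx i hi hin
  · rw [hδ x hx]
    exact mul_pos hS (hxpos n (by omega) le_rfl)
  · have hxy : x n = y n := mul_left_cancel₀ hS.ne' ((hδ x hx).symm.trans (hδ y hy))
    exact fun i hi hin => eq_of_Ft_eq_zero hn hlow' (fun i hi hin => hx i (by omega) hin)
      (fun i hi hin => hy i (by omega) hin) hxy hi hin
end

section
/- If δ̃(n) > 0 then δ̃(n−1) > 0. -/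
/-!
Expanding the products `Π_{l=k+1}^{m+1} ã_{l,l−1}` by their top factor gives the recursion
`δ̃(m+1) = ã_{m+1,m} δ̃(m) − ã_{m+1,0} S_1^m`. Every term of `S_1^m` is a product of coefficients
on the tridiagonal band of `{1, …, m}`, all nonnegative, so the subtracted term is nonnegative
and `δ̃(m+1) > 0` forces `δ̃(m) > 0` since `ã_{m+1,m} > 0`.
-/

open Finset

theorem apply_mem_Icc_of_mem_Aset {a b j : ℕ} {σ : Equiv.Perm ℕ} (hσ : σ ∈ Aset a b)
    (hj : j ∈ Icc a b) : σ j ∈ Icc a b := by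
  by_contra hσj
  have hinv : σ (σ j) = j := by simpa using congrArg (· j) hσ.1
  have hfix : σ (σ j) = σ j := hσ.2.1 (σ j) hσj
  rw [hinv] at hfix
  exact hσj (hfix ▸ hj)

theorem Ssum_nonneg (ta : ℕ → ℕ → ℝ) (a b : ℕ)
    (hband : ∀ j ∈ Icc a b, ∀ k ∈ Icc a b, |(k : ℤ) - j| ≤ 1 → 0 ≤ ta j k) :
    0 ≤ Ssum ta a b :=
  finsum_mem_induction (0 ≤ ·) le_rfl (fun _ _ => add_nonneg) fun σ hσ =>
    prod_nonneg fun j hj => hband j hj (σ j) (apply_mem_Icc_of_mem_Aset hσ hj) (hσ.2.2 j)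

/-- If `δ̃(n) > 0` then `δ̃(n−1) > 0`. -/
theorem stmt5 (n : ℕ) (hn : 2 ≤ n) (ta : ℕ → ℕ → ℝ)
    (hi0 : ∀ i, 2 ≤ i → i ≤ n → 0 < ta i 0)
    (h11 : 0 < ta 1 1)
    (hii : ∀ i, 2 ≤ i → i ≤ n → 0 ≤ ta i i)
    (hlow : ∀ i, 2 ≤ i → i ≤ n → 0 < ta i (i - 1))
    (hup : ∀ i, 1 ≤ i → i ≤ n - 1 → 0 < ta i (i + 1)) :
    0 < deltaT ta n → 0 < deltaT ta (n - 1) := by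
  intro hpos
  obtain ⟨m, rfl⟩ : ∃ m, n = m + 1 := ⟨n - 1, by omega⟩
  have hband : ∀ j ∈ Icc 1 m, ∀ k ∈ Icc 1 m, |(k : ℤ) - j| ≤ 1 → 0 ≤ ta j k := by
    intro j hj k hk hjk
    simp only [mem_Icc] at hj hk
    obtain ⟨hkj, h2⟩ | hkj | hkj : (k = j - 1 ∧ 2 ≤ j) ∨ k = j ∨ k = j + 1 := by grind
    · exact hkj ▸ (hlow j h2 (by omega)).le
    · obtain rfl | h2 := hj.1.eq_or_lt
      exacts [hkj ▸ h11.le, hkj ▸ hii j h2 (by omega)]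
    · exact hkj ▸ (hup j hj.1 (by omega)).le
  have hsub : 0 ≤ ta (m + 1) 0 * Ssum ta 1 m :=
    mul_nonneg (hi0 (m + 1) (by omega) le_rfl).le (Ssum_nonneg ta 1 m hband)
  have hlast : 0 < ta (m + 1) m := hlow (m + 1) (by omega) le_rfl
  rw [deltaT_succ ta (by omega)] at hpos
  rw [Nat.add_sub_cancel]
  exact pos_of_mul_pos_right (by linarith) hlast.le
end

section
/- Let p > 0. There exists a constant c_p > 0 such that for every a > 0 and every x ∈ ℝ: if p ≤ 1 then |a + x|^{1+p} ≤ a^{1+p} + (1+p)a^p x + c_p |x|^{1+p}, and if p > 1 then |a + x|^{1+p} ≤ a^{1+p} + (1+p)a^p x + a^p + c_p(|x|^{2p} + 1). -/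
/-!
Write `r = 1 + p`. When `a ≤ |x|` every term is of size `|x| ^ r`, so a crude bound suffices.
When `|x| < a`, the point `a + x` is positive and the tangent-line inequality for the convex
function `t ↦ t ^ r`, taken at `a + x`, bounds the second-order remainder by
`r x ((a + x) ^ p - a ^ p)`. For `p ≤ 1` this is at most `r |x| ^ r` by the `p`-Hölder
continuity of `t ↦ t ^ p`. For `p > 1` it is at most `K a ^ (p - 1) x ^ 2`, `K = r p 2 ^ (p - 1)`,
by the Lipschitz bound of `t ↦ t ^ p` on `[0, 2a]`, and Young's inequality splits this into
`a ^ p + K ^ p |x| ^ (2p)`.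
-/

open Real

/-- Gradient inequality for the convex function `t ↦ t ^ r`, taken at the point `w`. -/
lemma rpow_sub_rpow_le_mul_sub {r w v : ℝ} (hr : 1 ≤ r) (hw : 0 < w) (hv : 0 ≤ v) :
    w ^ r - v ^ r ≤ r * w ^ (r - 1) * (w - v) := by
  have hbern := one_add_mul_self_le_rpow_one_add
    (by linarith [div_nonneg hv hw.le] : (-1 : ℝ) ≤ v / w - 1) hr
  rw [add_sub_cancel, div_rpow hv hw.le, le_div_iff₀ (rpow_pos_of_pos hw r)] at hbern
  have hw_pow : w ^ r = w ^ (r - 1) * w := by rw [← rpow_add_one hw.ne', sub_add_cancel]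
  have hexpand : (1 + r * (v / w - 1)) * (w ^ (r - 1) * w)
      = w ^ (r - 1) * w - r * w ^ (r - 1) * (w - v) := by
    field_simp
    ring
  rw [hw_pow] at hbern ⊢
  linarith

lemma abs_rpow_sub_rpow_le_abs_sub_rpow {p y z : ℝ} (hp0 : 0 ≤ p) (hp1 : p ≤ 1)
    (hy : 0 ≤ y) (hz : 0 ≤ z) : |y ^ p - z ^ p| ≤ |y - z| ^ p := by
  wlog hzy : z ≤ y generalizing y z
  · rw [abs_sub_comm, abs_sub_comm y]
    exact this hz hy (le_of_not_ge hzy)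
  have hsub := rpow_add_le_add_rpow (sub_nonneg.2 hzy) hz hp0 hp1
  rw [sub_add_cancel] at hsub
  rw [abs_of_nonneg (sub_nonneg.2 (rpow_le_rpow hz hzy hp0)), abs_of_nonneg (sub_nonneg.2 hzy)]
  linarith

lemma abs_rpow_sub_rpow_le_mul_abs_sub {p y z M : ℝ} (hp : 1 ≤ p) (hy : 0 < y) (hz : 0 < z)
    (hyM : y ≤ M) (hzM : z ≤ M) : |y ^ p - z ^ p| ≤ p * M ^ (p - 1) * |y - z| := by
  wlog hzy : z ≤ y generalizing y z
  · rw [abs_sub_comm, abs_sub_comm y]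
    exact this hz hy hzM hyM (le_of_not_ge hzy)
  have hp0 : 0 ≤ p := by linarith
  rw [abs_of_nonneg (sub_nonneg.2 (rpow_le_rpow hz.le hzy hp0)),
    abs_of_nonneg (sub_nonneg.2 hzy)]
  calc y ^ p - z ^ p ≤ p * y ^ (p - 1) * (y - z) := rpow_sub_rpow_le_mul_sub hp hy hz.le
    _ ≤ p * M ^ (p - 1) * (y - z) := by gcongr

/-- Young's inequality `a ^ (p - 1) * b ≤ a ^ p + b ^ p`, with the constants dropped. -/
lemma rpow_sub_one_mul_le_rpow_add_rpow {p a b : ℝ} (hp : 1 ≤ p) (ha : 0 < a) (hb : 0 ≤ b) :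
    a ^ (p - 1) * b ≤ a ^ p + b ^ p := by
  rcases le_total b a with hba | hab
  · calc a ^ (p - 1) * b ≤ a ^ (p - 1) * a := by gcongr
      _ = a ^ p := by rw [← rpow_add_one ha.ne', sub_add_cancel]
      _ ≤ a ^ p + b ^ p := le_add_of_nonneg_right (rpow_nonneg hb p)
  · have hb0 : 0 < b := ha.trans_le hab
    calc a ^ (p - 1) * b ≤ b ^ (p - 1) * b := by gcongr
      _ = b ^ p := by rw [← rpow_add_one hb0.ne', sub_add_cancel]
      _ ≤ a ^ p + b ^ p := le_add_of_nonneg_left (rpow_nonneg ha.le p)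

lemma rpow_le_rpow_add_one {y s t : ℝ} (hy : 0 ≤ y) (hs : 0 ≤ s) (hst : s ≤ t) :
    y ^ s ≤ y ^ t + 1 := by
  rcases le_total y 1 with hy1 | hy1
  · linarith [rpow_le_one hy hy1 hs, rpow_nonneg hy t]
  · linarith [rpow_le_rpow_of_exponent_le hy1 hst]

lemma abs_add_rpow_le_of_le_abs {p a x : ℝ} (hp : 0 ≤ p) (ha : 0 < a) (hax : a ≤ |x|) :
    |a + x| ^ (1 + p) ≤
      a ^ (1 + p) + (1 + p) * a ^ p * x + (2 ^ (1 + p) + (1 + p)) * |x| ^ (1 + p) := by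
  have hsum : |a + x| ^ (1 + p) ≤ 2 ^ (1 + p) * |x| ^ (1 + p) := by
    rw [← mul_rpow zero_le_two (abs_nonneg x)]
    exact rpow_le_rpow (abs_nonneg _)
      (by linarith [abs_add_le a x, abs_of_pos ha]) (by linarith)
  have hlin : -(a ^ p * x) ≤ |x| ^ (1 + p) :=
    calc -(a ^ p * x) = a ^ p * -x := by ring
      _ ≤ a ^ p * |x| := by gcongr; exact neg_le_abs x
      _ ≤ |x| ^ p * |x| := by gcongr
      _ = |x| ^ (1 + p) := by rw [add_comm, rpow_add_one (ha.trans_le hax).ne']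
  linarith [rpow_nonneg ha.le (1 + p), mul_le_mul_of_nonneg_left hlin (by linarith : 0 ≤ 1 + p)]

lemma add_rpow_one_add_le {p a x : ℝ} (hp : 0 ≤ p) (ha : 0 < a) (hax : 0 < a + x) :
    (a + x) ^ (1 + p) ≤
      a ^ (1 + p) + (1 + p) * a ^ p * x + (1 + p) * (x * ((a + x) ^ p - a ^ p)) := by
  have h := rpow_sub_rpow_le_mul_sub (by linarith : (1 : ℝ) ≤ 1 + p) hax ha.le
  rw [add_sub_cancel_left, add_sub_cancel_left] at h
  linarith

lemma abs_add_rpow_le_of_le_one {p a : ℝ} (x : ℝ) (hp0 : 0 ≤ p) (hp1 : p ≤ 1) (ha : 0 < a) :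
    |a + x| ^ (1 + p) ≤
      a ^ (1 + p) + (1 + p) * a ^ p * x + (2 ^ (1 + p) + (1 + p)) * |x| ^ (1 + p) := by
  rcases le_or_gt a |x| with hax | hxa
  · exact abs_add_rpow_le_of_le_abs hp0 ha hax
  have hpos : 0 < a + x := by linarith [neg_abs_le x]
  have hrem : x * ((a + x) ^ p - a ^ p) ≤ |x| ^ (1 + p) :=
    calc x * ((a + x) ^ p - a ^ p) ≤ |x| * |(a + x) ^ p - a ^ p| := by
          rw [← abs_mul]; exact le_abs_self _
      _ ≤ |x| * |x| ^ p := by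
          gcongr
          simpa using abs_rpow_sub_rpow_le_abs_sub_rpow hp0 hp1 hpos.le ha.le
      _ = |x| ^ (1 + p) := by
          rw [rpow_add' (abs_nonneg x) (by linarith), rpow_one]
  rw [abs_of_pos hpos]
  linarith [add_rpow_one_add_le hp0 ha hpos,
    mul_le_mul_of_nonneg_left hrem (by linarith : 0 ≤ 1 + p),
    mul_nonneg (rpow_nonneg zero_le_two (1 + p)) (rpow_nonneg (abs_nonneg x) (1 + p))]

lemma abs_add_rpow_le_of_one_le {p a : ℝ} (x : ℝ) (hp : 1 ≤ p) (ha : 0 < a) :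
    |a + x| ^ (1 + p) ≤ a ^ (1 + p) + (1 + p) * a ^ p * x + a ^ p +
      (2 ^ (1 + p) + (1 + p) + ((1 + p) * p * 2 ^ (p - 1)) ^ p) * (|x| ^ (2 * p) + 1) := by
  have hp0 : 0 ≤ p := by linarith
  set K := (1 + p) * p * 2 ^ (p - 1)
  have hK : 0 ≤ K := by positivity
  have hT : 0 ≤ |x| ^ (2 * p) + 1 := by positivity
  rcases le_or_gt a |x| with hax | hxa
  · have hcrude := abs_add_rpow_le_of_le_abs hp0 ha hax
    have hmono := rpow_le_rpow_add_one (abs_nonneg x) (by linarith) (by linarith : 1 + p ≤ 2 * p)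
    linarith [mul_le_mul_of_nonneg_left hmono (by positivity : 0 ≤ 2 ^ (1 + p) + (1 + p)),
      mul_nonneg (rpow_nonneg hK p) hT, rpow_nonneg ha.le p]
  have hpos : 0 < a + x := by linarith [neg_abs_le x]
  have hrem : (1 + p) * (x * ((a + x) ^ p - a ^ p)) ≤ a ^ (p - 1) * (K * x ^ 2) :=
    calc (1 + p) * (x * ((a + x) ^ p - a ^ p))
        ≤ (1 + p) * (|x| * |(a + x) ^ p - a ^ p|) := by
          rw [← abs_mul]; gcongr; exact le_abs_self _
      _ ≤ (1 + p) * (|x| * (p * (2 * a) ^ (p - 1) * |x|)) := by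
          gcongr
          simpa using abs_rpow_sub_rpow_le_mul_abs_sub hp hpos ha
            (by linarith [le_abs_self x]) (by linarith)
      _ = a ^ (p - 1) * (K * x ^ 2) := by
          rw [mul_rpow zero_le_two ha.le, ← sq_abs x]; ring
  have hyoung := rpow_sub_one_mul_le_rpow_add_rpow hp ha (by positivity : 0 ≤ K * x ^ 2)
  have hsplit : (K * x ^ 2) ^ p = K ^ p * |x| ^ (2 * p) := by
    rw [mul_rpow hK (sq_nonneg x), rpow_mul (abs_nonneg x), rpow_two, sq_abs]
  rw [abs_of_pos hpos]
  linarith [add_rpow_one_add_le hp0 ha hpos, rpow_nonneg hK p,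
    mul_nonneg (by positivity : 0 ≤ 2 ^ (1 + p) + (1 + p)) hT]

/-- Elementary power inequality: for `p > 0` there is `c_p > 0` such that for all `a > 0`
and `x ∈ ℝ`, `|a+x|^{1+p} ≤ a^{1+p} + (1+p)a^p x + c_p|x|^{1+p}` when `p ≤ 1`, and
`|a+x|^{1+p} ≤ a^{1+p} + (1+p)a^p x + a^p + c_p(|x|^{2p}+1)` when `p > 1`. -/
theorem stmt8 (p : ℝ) (hp : 0 < p) :
    ∃ c : ℝ, 0 < c ∧ ∀ a x : ℝ, 0 < a →
      (p ≤ 1 →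
        |a + x| ^ (1 + p) ≤ a ^ (1 + p) + (1 + p) * a ^ p * x + c * |x| ^ (1 + p)) ∧
      (1 < p →
        |a + x| ^ (1 + p) ≤
          a ^ (1 + p) + (1 + p) * a ^ p * x + a ^ p + c * (|x| ^ (2 * p) + 1)) := by
  rcases le_or_gt p 1 with hp1 | hp1
  · exact ⟨2 ^ (1 + p) + (1 + p), by positivity, fun a x ha =>
      ⟨fun _ => abs_add_rpow_le_of_le_one x hp.le hp1 ha, fun h => absurd hp1 (not_le.2 h)⟩⟩
  · exact ⟨2 ^ (1 + p) + (1 + p) + ((1 + p) * p * 2 ^ (p - 1)) ^ p, by positivity,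
      fun a x ha => ⟨fun h => absurd h (not_le.2 hp1),
        fun _ => abs_add_rpow_le_of_one_le x hp1.le ha⟩⟩
end

section
/- Define c_i for 1 ≤ i ≤ n by choosing any c_1 > 0 and setting c_i := c_1 Π_{k=2}^{i} (a_{k−1,k}/a_{k,k−1}), and define U(x) := 1 + Σ_{i=1}^{n} c_i x_i. Set α := min_{2 ≤ i ≤ n} a_{i0}, β := α + sup_{x_1 > 0} (c_1 x_1(a_{10} − a_{11}x_1) + α c_1 x_1) (this supremum is finite since a_{11} > 0), and γ := max_{1 ≤ i ≤ n} σ_i². Then for every x ∈ ℝ_+^n one has Σ_{i=1}^{n} c_i x_i F_i(x) ≤ −α U(x) + β and Σ_{i=1}^{n} σ_i² c_i² x_i² ≤ γ U(x)². (Since U is affine, the left-hand sides are respectively LU(x) and Γ_L(U)(x) for the generator Lg(x) = Σ_i x_iF_i(x)∂g/∂x_i + ½Σ_i σ_i²x_i²∂²g/∂x_i² and carré du champ Γ_L(g)(x) = Σ_i σ_i²x_i²(∂g/∂x_i)².) -/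
/-!
The weights `c i` are chosen so that `c (i+1) * a (i+1) i = c i * a i (i+1)`: the predation
gain of species `i + 1` and the corresponding loss of species `i` then cancel in
`Σ c_i x_i F_i(x)`, which telescopes to `c₁x₁(a₁₀ − a₁₁x₁) − Σ_{i≥2} c_i x_i (a_{i0} + a_{ii} x_i)`.
Bounding `a_{i0} ≥ α` and the concave quadratic in `x₁` by its maximum gives the drift bound.
The second bound is `Σ σ_i² y_i² ≤ γ (Σ y_i)² ≤ γ (1 + Σ y_i)²` for `y_i = c_i x_i ≥ 0`.
-/

/-- The drift field `F` of the Lotka–Volterra food chain (components indexed by `1 ≤ i ≤ n`). -/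
def Fdrift (n : ℕ) (a : ℕ → ℕ → ℝ) (x : ℕ → ℝ) (i : ℕ) : ℝ :=
  if i = 1 then a 1 0 - a 1 1 * x 1 - a 1 2 * x 2
  else if i = n then -a n 0 + a n (n - 1) * x (n - 1) - a n n * x n
  else -a i 0 + a i (i - 1) * x (i - 1) - a i i * x i - a i (i + 1) * x (i + 1)

open Finset

theorem sum_Icc_one_pred_sub {G : Type*} [AddCommGroup G] (f : ℕ → G) (n : ℕ) :
    ∑ i ∈ Icc 1 n, (f (i - 1) - f i) = f 0 - f n := by
  induction n with
  | zero => simp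
  | succ n ih => rw [sum_Icc_succ_top (by omega), ih, Nat.add_sub_cancel]; abel

theorem mul_sub_mul_le_sq_div {A : ℝ} (hA : 0 < A) (b t : ℝ) :
    t * (b - A * t) ≤ b ^ 2 / (4 * A) := by
  rw [le_div_iff₀ (by positivity)]
  nlinarith [sq_nonneg (b - 2 * A * t)]

theorem sSup_image_Ioi_mul_sub_mul {A b : ℝ} (hA : 0 < A) (hb : 0 < b) :
    sSup ((fun t => t * (b - A * t)) '' Set.Ioi 0) = b ^ 2 / (4 * A) := by
  have hmem : b ^ 2 / (4 * A) ∈ (fun t => t * (b - A * t)) '' Set.Ioi 0 :=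
    ⟨b / (2 * A), by simp only [Set.mem_Ioi]; positivity, by field_simp; ring⟩
  refine IsGreatest.csSup_eq ⟨hmem, ?_⟩
  rintro _ ⟨t, _, rfl⟩
  exact mul_sub_mul_le_sq_div hA b t

theorem sum_mul_sq_le_mul_one_add_sum_sq {ι : Type*} {s : Finset ι} {w y : ι → ℝ} {γ : ℝ}
    (hγ : 0 ≤ γ) (hw : ∀ i ∈ s, w i ≤ γ) (hy : ∀ i ∈ s, 0 ≤ y i) :
    ∑ i ∈ s, w i * y i ^ 2 ≤ γ * (1 + ∑ i ∈ s, y i) ^ 2 :=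
  calc ∑ i ∈ s, w i * y i ^ 2
      ≤ ∑ i ∈ s, γ * y i ^ 2 := sum_le_sum fun i hi => by gcongr; exact hw i hi
    _ = γ * ∑ i ∈ s, y i ^ 2 := by rw [mul_sum]
    _ ≤ γ * (∑ i ∈ s, y i) ^ 2 := by gcongr; exact sum_sq_le_sq_sum_of_nonneg hy
    _ ≤ γ * (1 + ∑ i ∈ s, y i) ^ 2 := by
      have := sum_nonneg hy
      gcongr
      linarith

section Coefficients

variable {n : ℕ} {c r : ℕ → ℝ}

theorem eq_mul_of_forall_eq_mul_prod (hc : ∀ i, 2 ≤ i → i ≤ n → c i = c 1 * ∏ k ∈ Icc 2 i, r k)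
    {i : ℕ} (hi : 1 ≤ i) (hin : i < n) :
    c (i + 1) = c i * r (i + 1) := by
  rw [hc (i + 1) (by omega) hin, prod_Icc_succ_top (by omega), ← mul_assoc]
  rcases hi.eq_or_lt with rfl | hi
  · simp
  · rw [← hc i hi hin.le]

theorem pos_of_forall_eq_mul_prod (hc : ∀ i, 2 ≤ i → i ≤ n → c i = c 1 * ∏ k ∈ Icc 2 i, r k)
    (hc1 : 0 < c 1) (hr : ∀ k, 2 ≤ k → k ≤ n → 0 < r k)
    {i : ℕ} (hi : 1 ≤ i) (hin : i ≤ n) : 0 < c i := by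
  rcases hi.eq_or_lt with rfl | hi
  · exact hc1
  · rw [hc i hi hin]
    exact mul_pos hc1 (prod_pos fun k hk => hr k (mem_Icc.1 hk).1 ((mem_Icc.1 hk).2.trans hin))

end Coefficients

def selfDrift (a : ℕ → ℕ → ℝ) (x : ℕ → ℝ) (i : ℕ) : ℝ :=
  if i = 1 then a 1 0 - a 1 1 * x 1 else -a i 0 - a i i * x i

def interactionFlux (n : ℕ) (a : ℕ → ℕ → ℝ) (c x : ℕ → ℝ) (j : ℕ) : ℝ :=
  if 1 ≤ j ∧ j < n then c j * a j (j + 1) * x j * x (j + 1) else 0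

section Drift

variable {n : ℕ} {a : ℕ → ℕ → ℝ} {c : ℕ → ℝ}

theorem mul_Fdrift_eq (hn : 2 ≤ n)
    (hbal : ∀ i, 1 ≤ i → i < n → c (i + 1) * a (i + 1) i = c i * a i (i + 1))
    (x : ℕ → ℝ) {i : ℕ} (hi : 1 ≤ i) (hin : i ≤ n) :
    c i * x i * Fdrift n a x i = c i * x i * selfDrift a x i
      + (interactionFlux n a c x (i - 1) - interactionFlux n a c x i) := by
  rcases hi.eq_or_lt with rfl | hi
  · simp [Fdrift, selfDrift, interactionFlux, show 1 < n by omega]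
    ring
  obtain ⟨m, rfl⟩ : ∃ m, i = m + 1 := ⟨i - 1, by omega⟩
  have hm := hbal m (by omega) (by omega)
  rcases hin.eq_or_lt with rfl | hin
  · simp [Fdrift, selfDrift, interactionFlux, show m ≠ 0 by omega, show 1 ≤ m by omega]
    linear_combination x m * x (m + 1) * hm
  · simp [Fdrift, selfDrift, interactionFlux, show m ≠ 0 by omega, show 1 ≤ m by omega,
      hin.ne, hin, show m < n by omega]
    linear_combination x m * x (m + 1) * hm

theorem sum_mul_Fdrift_eq (hn : 2 ≤ n)
    (hbal : ∀ i, 1 ≤ i → i < n → c (i + 1) * a (i + 1) i = c i * a i (i + 1))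
    (x : ℕ → ℝ) :
    ∑ i ∈ Icc 1 n, c i * x i * Fdrift n a x i = ∑ i ∈ Icc 1 n, c i * x i * selfDrift a x i := by
  rw [sum_congr rfl fun i hi => mul_Fdrift_eq hn hbal x (mem_Icc.1 hi).1 (mem_Icc.1 hi).2,
    sum_add_distrib, sum_Icc_one_pred_sub]
  simp [interactionFlux]

theorem sum_mul_selfDrift_le (hn : 1 ≤ n) {α : ℝ} (hα : ∀ i, 2 ≤ i → i ≤ n → α ≤ a i 0)
    (hii : ∀ i, 2 ≤ i → i ≤ n → 0 ≤ a i i) (hc : ∀ i, 1 ≤ i → i ≤ n → 0 ≤ c i) {x : ℕ → ℝ}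
    (hx : ∀ i, 1 ≤ i → i ≤ n → 0 ≤ x i) :
    ∑ i ∈ Icc 1 n, c i * x i * selfDrift a x i
      ≤ c 1 * x 1 * (a 1 0 - a 1 1 * x 1) + α * (c 1 * x 1)
        - α * ∑ i ∈ Icc 1 n, c i * x i := by
  have hrest : ∑ i ∈ Icc 2 n, c i * x i * selfDrift a x i ≤ ∑ i ∈ Icc 2 n, -α * (c i * x i) := by
    refine sum_le_sum fun i hi => ?_
    obtain ⟨h2i, hin⟩ := mem_Icc.1 hi
    have hcxi := mul_nonneg (hc i (by omega) hin) (hx i (by omega) hin)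
    rw [selfDrift, if_neg (by omega)]
    nlinarith [hα i h2i hin, hii i h2i hin, mul_nonneg hcxi (hx i (by omega) hin)]
  rw [← mul_sum] at hrest
  have hsplit : Icc 1 n = insert 1 (Icc 2 n) := (insert_Icc_add_one_left_eq_Icc hn).symm
  rw [hsplit, sum_insert (by simp), sum_insert (by simp), selfDrift, if_pos rfl]
  linarith

end Drift

/-- The affine Lyapunov function `U(x) = 1 + Σ c_i x_i` satisfies
`LU ≤ −αU + β` and `Γ_L(U) ≤ γU²` on `ℝ_+^n`, where
`α = min_{2≤i≤n} a_{i0}`, `β = α + sup_{x₁>0}(c₁x₁(a_{10}−a_{11}x₁)+αc₁x₁)` and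
`γ = max_i σ_i²`. Since `U` is affine, `LU(x) = Σ c_i x_i F_i(x)` and
`Γ_L(U)(x) = Σ σ_i² c_i² x_i²`. -/
theorem stmt11 (n : ℕ) (hn : 2 ≤ n) (a : ℕ → ℕ → ℝ) (σ : ℕ → ℝ)
    (h10 : 0 < a 1 0)
    (hi0 : ∀ i, 2 ≤ i → i ≤ n → 0 < a i 0)
    (h11 : 0 < a 1 1)
    (hii : ∀ i, 2 ≤ i → i ≤ n → 0 ≤ a i i)
    (hlow : ∀ i, 2 ≤ i → i ≤ n → 0 < a i (i - 1))
    (hup : ∀ i, 1 ≤ i → i ≤ n - 1 → 0 < a i (i + 1))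
    (c : ℕ → ℝ) (hc1 : 0 < c 1)
    (hc : ∀ i, 2 ≤ i → i ≤ n →
      c i = c 1 * ∏ k ∈ Finset.Icc 2 i, a (k - 1) k / a k (k - 1))
    (U : (ℕ → ℝ) → ℝ) (hU : ∀ x, U x = 1 + ∑ i ∈ Finset.Icc 1 n, c i * x i)
    (α β γ : ℝ)
    (hα : α = (Finset.Icc 2 n).inf' (Finset.nonempty_Icc.mpr hn) (fun i => a i 0))
    (hβ : β = α + sSup ((fun x1 : ℝ =>
      c 1 * x1 * (a 1 0 - a 1 1 * x1) + α * (c 1 * x1)) '' Set.Ioi 0))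
    (hγ : γ = (Finset.Icc 1 n).sup' (Finset.nonempty_Icc.mpr (by omega)) (fun i => σ i ^ 2)) :
    ∀ x : ℕ → ℝ, (∀ i, 1 ≤ i → i ≤ n → 0 ≤ x i) →
      (∑ i ∈ Finset.Icc 1 n, c i * x i * Fdrift n a x i ≤ -α * U x + β) ∧
      (∑ i ∈ Finset.Icc 1 n, σ i ^ 2 * c i ^ 2 * x i ^ 2 ≤ γ * U x ^ 2) := by
  intro x hx
  have hcpos : ∀ i, 1 ≤ i → i ≤ n → 0 < c i := by
    refine fun i => pos_of_forall_eq_mul_prod hc hc1 fun k hk hkn => div_pos ?_ (hlow k hk hkn)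
    simpa [Nat.sub_add_cancel (by omega : 1 ≤ k)] using hup (k - 1) (by omega) (by omega)
  have hbal : ∀ i, 1 ≤ i → i < n → c (i + 1) * a (i + 1) i = c i * a i (i + 1) := by
    intro i hi hin
    have hpos : 0 < a (i + 1) i := by simpa using hlow (i + 1) (by omega) hin
    rw [eq_mul_of_forall_eq_mul_prod hc hi hin, Nat.add_sub_cancel, mul_assoc,
      div_mul_cancel₀ _ hpos.ne']
  have hα_le : ∀ i, 2 ≤ i → i ≤ n → α ≤ a i 0 := fun i hi hin =>
    hα ▸ inf'_le _ (mem_Icc.2 ⟨hi, hin⟩)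
  have hα_pos : 0 < α := hα ▸ (lt_inf'_iff _).2 fun i hi => hi0 i (mem_Icc.1 hi).1 (mem_Icc.1 hi).2
  have hγ_le : ∀ i ∈ Icc 1 n, σ i ^ 2 ≤ γ := fun i hi => hγ ▸ le_sup' (fun i => σ i ^ 2) hi
  have hβ_eq : β = α + (c 1 * (a 1 0 + α)) ^ 2 / (4 * (c 1 * a 1 1)) := by
    rw [hβ, ← sSup_image_Ioi_mul_sub_mul (mul_pos hc1 h11) (mul_pos hc1 (by linarith))]
    congr 3
    funext t
    ring
  constructor
  · rw [sum_mul_Fdrift_eq hn hbal x, hβ_eq, hU]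
    have := sum_mul_selfDrift_le (by omega) hα_le hii (fun i hi hin => (hcpos i hi hin).le) hx
    have := mul_sub_mul_le_sq_div (mul_pos hc1 h11) (c 1 * (a 1 0 + α)) (x 1)
    linarith
  · have hγ_nonneg : 0 ≤ γ := (sq_nonneg (σ 1)).trans (hγ_le 1 (mem_Icc.2 ⟨le_rfl, by omega⟩))
    have hcx : ∀ i ∈ Icc 1 n, 0 ≤ c i * x i := fun i hi =>
      mul_nonneg (hcpos i (mem_Icc.1 hi).1 (mem_Icc.1 hi).2).le
        (hx i (mem_Icc.1 hi).1 (mem_Icc.1 hi).2)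
    calc ∑ i ∈ Icc 1 n, σ i ^ 2 * c i ^ 2 * x i ^ 2 = ∑ i ∈ Icc 1 n, σ i ^ 2 * (c i * x i) ^ 2 :=
          sum_congr rfl fun i _ => by ring
      _ ≤ γ * U x ^ 2 := hU x ▸ sum_mul_sq_le_mul_one_add_sum_sq hγ_nonneg hγ_le hcx
end

section
/- Let U : ℝ^n → ℝ be a C² function with U(x) ≥ 1 for all x ∈ ℝ_+^n, and suppose there are constants α, β > 0 and γ > 0 such that LU(x) ≤ −αU(x) + β and Γ_L(U)(x) ≤ γU(x)² for all x ∈ ℝ_+^n. Let q₀ := 1 + 2α/γ (the unique q₀ > 1 with −α + (q₀−1)γ/2 = 0). Then for every q with 1 < q < q₀ there exist constants k_{1q}, k_{2q} > 0 such that L(U^q)(x) ≤ k_{1q} − k_{2q} U^q(x) for all x ∈ ℝ_+^n. -/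
/-- Partial derivative `∂g/∂x_i(x)`. -/
noncomputable def pd {n : ℕ} (g : (Fin n → ℝ) → ℝ) (i : Fin n) (x : Fin n → ℝ) : ℝ :=
  fderiv ℝ g x (Pi.single i 1)

/-- Second partial derivative `∂²g/∂x_i²(x)`. -/
noncomputable def pd2 {n : ℕ} (g : (Fin n → ℝ) → ℝ) (i : Fin n) (x : Fin n → ℝ) : ℝ :=
  fderiv ℝ (fun y => fderiv ℝ g y (Pi.single i 1)) x (Pi.single i 1)

/-- The generator `Lg(x) = Σ_i x_iF_i(x)∂g/∂x_i(x) + ½Σ_i σ_i²x_i²∂²g/∂x_i²(x)`. -/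
noncomputable def Lgen {n : ℕ} (F : Fin n → (Fin n → ℝ) → ℝ) (σ : Fin n → ℝ)
    (g : (Fin n → ℝ) → ℝ) (x : Fin n → ℝ) : ℝ :=
  ∑ i, x i * F i x * pd g i x + (1 / 2) * ∑ i, σ i ^ 2 * x i ^ 2 * pd2 g i x

/-- The carré du champ `Γ_L(g)(x) = Σ_i σ_i²x_i²(∂g/∂x_i(x))²`. -/
noncomputable def GammaL {n : ℕ} (σ : Fin n → ℝ) (g : (Fin n → ℝ) → ℝ)
    (x : Fin n → ℝ) : ℝ :=
  ∑ i, σ i ^ 2 * x i ^ 2 * (pd g i x) ^ 2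

/-! The chain rule for the diffusion generator gives
`L(U^q) = q U^{q-1} LU + q(q-1)/2 U^{q-2} Γ_L(U)`, so the hypotheses yield
`L(U^q) ≤ -qδ U^q + qβ U^{q-1}` with `δ = α - (q-1)γ/2`, which is positive exactly when `q < q₀`.
The lower-order term is absorbed through `u^{q-1} ≤ u^q/t + t^{q-1}` with `t = 2β/δ`,
which costs half of the negative drift. -/

open Real

section ChainRule

variable {n : ℕ} {U : (Fin n → ℝ) → ℝ} {q : ℝ}

lemma pd_rpow (hU : Differentiable ℝ U) (hq : 1 ≤ q) (i : Fin n) (x : Fin n → ℝ) :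
    pd (fun y => U y ^ q) i x = q * U x ^ (q - 1) * pd U i x := by
  simp [pd, ((hU x).hasFDerivAt.rpow_const (Or.inr hq)).fderiv, mul_assoc]

lemma pd2_rpow (hU : ContDiff ℝ 2 U) (hq : 1 ≤ q) (i : Fin n) {x : Fin n → ℝ}
    (hx : U x ≠ 0) :
    pd2 (fun y => U y ^ q) i x
      = q * (q - 1) * U x ^ (q - 2) * pd U i x ^ 2 + q * U x ^ (q - 1) * pd2 U i x := by
  have hUd : Differentiable ℝ U := hU.differentiable two_ne_zero
  have hpd : Differentiable ℝ (pd U i) := fun y =>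
    ((hU.fderiv_right (m := 1) (by norm_num)).clm_apply contDiff_const).differentiable
      one_ne_zero y
  have hpd_rpow : pd (fun y => U y ^ q) i = fun y => q * (U y ^ (q - 1) * pd U i y) :=
    funext fun y => by rw [pd_rpow hUd hq, mul_assoc]
  have hderiv : HasFDerivAt (fun y => q * (U y ^ (q - 1) * pd U i y)) _ x :=
    (((hUd x).hasFDerivAt.rpow_const (Or.inl hx)).mul (hpd x).hasFDerivAt).const_mul q
  have h2 : q - 1 - 1 = q - 2 := by ring
  change fderiv ℝ (pd (fun y => U y ^ q) i) x (Pi.single i 1)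
    = _ + q * U x ^ (q - 1) * fderiv ℝ (pd U i) x (Pi.single i 1)
  rw [hpd_rpow, hderiv.fderiv]
  simp only [pd, h2, smul_add, add_apply, smul_apply, smul_eq_mul]
  ring

theorem Lgen_rpow (F : Fin n → (Fin n → ℝ) → ℝ) (σ : Fin n → ℝ) (hU : ContDiff ℝ 2 U)
    (hq : 1 ≤ q) {x : Fin n → ℝ} (hx : U x ≠ 0) :
    Lgen F σ (fun y => U y ^ q) x
      = q * U x ^ (q - 1) * Lgen F σ U x + q * (q - 1) / 2 * U x ^ (q - 2) * GammaL σ U x := by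
  simp only [Lgen, GammaL, pd_rpow (hU.differentiable two_ne_zero) hq, pd2_rpow hU hq _ hx,
    mul_add, Finset.mul_sum, ← Finset.sum_add_distrib]
  exact Finset.sum_congr rfl fun i _ => by ring

end ChainRule

lemma rpow_sub_one_le_div_add_rpow_sub_one {u t q : ℝ} (hu : 0 < u) (ht : 0 < t)
    (hq : 1 ≤ q) : u ^ (q - 1) ≤ u ^ q / t + t ^ (q - 1) := by
  rcases le_total u t with hut | htu
  · have := rpow_le_rpow hu.le hut (sub_nonneg.mpr hq)
    have : 0 ≤ u ^ q / t := by positivity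
    linarith
  · calc u ^ (q - 1) = u ^ q / u := rpow_sub_one hu.ne' q
      _ ≤ u ^ q / t := by gcongr
      _ ≤ u ^ q / t + t ^ (q - 1) := le_add_of_nonneg_right (by positivity)

lemma rpow_drift_bound {u L Γ α β γ q : ℝ} (hu : 0 < u) (hβ : 0 < β) (hq : 1 < q)
    (hδ : 0 < α - (q - 1) * γ / 2) (hL : L ≤ -α * u + β) (hΓ : Γ ≤ γ * u ^ 2) :
    q * u ^ (q - 1) * L + q * (q - 1) / 2 * u ^ (q - 2) * Γ
      ≤ q * β * (2 * β / (α - (q - 1) * γ / 2)) ^ (q - 1)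
        - q * (α - (q - 1) * γ / 2) / 2 * u ^ q := by
  set δ := α - (q - 1) * γ / 2
  set t := 2 * β / δ
  have hq0 : 0 < q := by linarith
  have hq1 : 0 < q - 1 := by linarith
  have hu1 : u ^ (q - 1) * u = u ^ q := by rw [rpow_sub_one hu.ne', div_mul_cancel₀ _ hu.ne']
  have hu2 : u ^ (q - 2) * u ^ 2 = u ^ q := by
    rw [show u ^ (q - 2) = u ^ q / u ^ 2 by exact_mod_cast rpow_sub_natCast hu.ne' q 2,
      div_mul_cancel₀ _ (by positivity)]
  calc q * u ^ (q - 1) * L + q * (q - 1) / 2 * u ^ (q - 2) * Γ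
      ≤ q * u ^ (q - 1) * (-α * u + β) + q * (q - 1) / 2 * u ^ (q - 2) * (γ * u ^ 2) := by
        gcongr
    _ = -(q * δ) * u ^ q + q * β * u ^ (q - 1) := by
        linear_combination (-(q * α)) * hu1 + (q * (q - 1) * γ / 2) * hu2
    _ ≤ -(q * δ) * u ^ q + q * β * (u ^ q / t + t ^ (q - 1)) := by
        gcongr
        exact rpow_sub_one_le_div_add_rpow_sub_one hu (by positivity) hq.le
    _ = q * β * t ^ (q - 1) - q * δ / 2 * u ^ q := by
        simp only [t]
        field_simp
        ring

theorem stmt12_general (n : ℕ)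
    (F : Fin n → (Fin n → ℝ) → ℝ)
    (σ : Fin n → ℝ)
    (U : (Fin n → ℝ) → ℝ) (hU : ContDiff ℝ 2 U)
    (hU1 : ∀ x : Fin n → ℝ, (∀ i, 0 ≤ x i) → 1 ≤ U x)
    (α β γ : ℝ) (hβ : 0 < β) (hγ : 0 < γ)
    (hL : ∀ x : Fin n → ℝ, (∀ i, 0 ≤ x i) → Lgen F σ U x ≤ -α * U x + β)
    (hΓ : ∀ x : Fin n → ℝ, (∀ i, 0 ≤ x i) → GammaL σ U x ≤ γ * U x ^ 2)
    (q : ℝ) (hq1 : 1 < q) (hq0 : q < 1 + 2 * α / γ) :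
    ∃ k1 k2 : ℝ, 0 < k1 ∧ 0 < k2 ∧
      ∀ x : Fin n → ℝ, (∀ i, 0 ≤ x i) →
        Lgen F σ (fun y => U y ^ q) x ≤ k1 - k2 * U x ^ q := by
  have hδ : 0 < α - (q - 1) * γ / 2 := by
    have := (lt_div_iff₀ hγ).mp (sub_lt_iff_lt_add'.mpr hq0)
    linarith
  set δ := α - (q - 1) * γ / 2
  have hq : 0 < q := by linarith
  refine ⟨q * β * (2 * β / δ) ^ (q - 1), q * δ / 2, by positivity, by positivity, fun x hx => ?_⟩
  have hUx : 0 < U x := one_pos.trans_le (hU1 x hx)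
  rw [Lgen_rpow F σ hU hq1.le hUx.ne']
  exact rpow_drift_bound hUx hβ hq1 hδ (hL x hx) (hΓ x hx)

/-- If `U ≥ 1` on `ℝ_+^n`, `LU ≤ −αU + β` and `Γ_L(U) ≤ γU²` on `ℝ_+^n`, then for every
`1 < q < q₀ := 1 + 2α/γ` there are `k_{1q}, k_{2q} > 0` with
`L(U^q) ≤ k_{1q} − k_{2q}U^q` on `ℝ_+^n`. -/
theorem stmt12 (n : ℕ) (hn : 1 ≤ n)
    (F : Fin n → (Fin n → ℝ) → ℝ) (hF : ∀ i, Continuous (F i))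
    (σ : Fin n → ℝ)
    (U : (Fin n → ℝ) → ℝ) (hU : ContDiff ℝ 2 U)
    (hU1 : ∀ x : Fin n → ℝ, (∀ i, 0 ≤ x i) → 1 ≤ U x)
    (α β γ : ℝ) (hα : 0 < α) (hβ : 0 < β) (hγ : 0 < γ)
    (hL : ∀ x : Fin n → ℝ, (∀ i, 0 ≤ x i) → Lgen F σ U x ≤ -α * U x + β)
    (hΓ : ∀ x : Fin n → ℝ, (∀ i, 0 ≤ x i) → GammaL σ U x ≤ γ * U x ^ 2)
    (q : ℝ) (hq1 : 1 < q) (hq0 : q < 1 + 2 * α / γ) :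
    ∃ k1 k2 : ℝ, 0 < k1 ∧ 0 < k2 ∧
      ∀ x : Fin n → ℝ, (∀ i, 0 ≤ x i) →
        Lgen F σ (fun y => U y ^ q) x ≤ k1 - k2 * U x ^ q :=
  stmt12_general n F σ U hU hU1 α β γ hβ hγ hL hΓ q hq1 hq0
end

section
/- Assume δ̃(n) > 0, and let p* ∈ ℝ_{++}^n be the unique point of ℝ_{++}^n with F̃(p*) = 0. Then p* is globally asymptotically stable for the deterministic Lotka–Volterra food chain: every differentiable curve x : [0, ∞) → ℝ_{++}^n satisfying x_i'(t) = x_i(t) F̃_i(x(t)) for all t ≥ 0 and all 1 ≤ i ≤ n converges to p*, i.e. x(t) → p* as t → ∞. -/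
/-!
Choose weights `c_i` with `c_i ã_{i,i+1} = c_{i+1} ã_{i+1,i}`. Along a positive solution the
Volterra function `V(x) = Σ c_i (x_i - p_i - p_i log (x_i / p_i))` has derivative
`Σ c_i (x_i - p_i) F̃_i(x) = -Σ c_i ã_{ii} (x_i - p_i)²`: the off-diagonal terms cancel in pairs.
So `V` decreases and is bounded below; the orbit stays bounded, and with it every derivative of
`x` that the argument needs. Since `ã_{11} > 0`, a Barbalat-type argument gives `x_1 → p_1`. If
`x_1, …, x_k` converge, Barbalat applied to `x_k - p_k` (bounded second derivative) gives
`x_k F̃_k(x) → 0`, hence `F̃_k(x) → 0`; as `F̃_k` is affine with coefficient `-ã_{k,k+1} ≠ 0` in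
`x_{k+1}`, this forces `x_{k+1} → p_{k+1}`.
-/

section Barbalat

open Set Filter Topology

theorem sub_le_mul_sub_of_hasDerivAt_le {f f' : ℝ → ℝ} {a b C : ℝ} (hab : a ≤ b)
    (hf : ∀ s ∈ Icc a b, HasDerivAt f (f' s) s) (hf' : ∀ s ∈ Icc a b, f' s ≤ C) :
    f b - f a ≤ C * (b - a) :=
  (convex_Icc a b).image_sub_le_mul_sub_of_deriv_le
    (fun s hs => (hf s hs).continuousAt.continuousWithinAt)
    (fun s hs => (hf s (interior_subset hs)).differentiableAt.differentiableWithinAt)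
    (fun s hs => (hf s (interior_subset hs)).deriv ▸ hf' s (interior_subset hs))
    a ⟨le_rfl, hab⟩ b ⟨hab, le_rfl⟩ hab

theorem abs_sub_le_mul_sub_of_hasDerivAt {f f' : ℝ → ℝ} {a b C : ℝ} (hab : a ≤ b)
    (hf : ∀ s ∈ Icc a b, HasDerivAt f (f' s) s) (hf' : ∀ s ∈ Icc a b, |f' s| ≤ C) :
    |f b - f a| ≤ C * (b - a) :=
  norm_image_sub_le_of_norm_deriv_le_segment' (fun s hs => (hf s hs).hasDerivWithinAt)
    (fun s hs => hf' s (Ico_subset_Icc_self hs)) b ⟨hab, le_rfl⟩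

theorem exists_tendsto_of_hasDerivAt_nonpos {v v' : ℝ → ℝ}
    (hv : ∀ᶠ t in atTop, HasDerivAt v (v' t) t) (hv' : ∀ᶠ t in atTop, v' t ≤ 0)
    (hv_bdd : IsBoundedUnder (· ≥ ·) atTop v) : ∃ l, Tendsto v atTop (𝓝 l) := by
  obtain ⟨m, hm⟩ := hv_bdd
  obtain ⟨T, hT⟩ := eventually_atTop.1 ((hv.and hv').and (eventually_map.1 hm))
  have hanti : Antitone fun t => v (max T t) := fun a b hab => by
    have := sub_le_mul_sub_of_hasDerivAt_le (max_le_max le_rfl hab)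
      (fun s hs => (hT s ((le_max_left T a).trans hs.1)).1.1)
      (fun s hs => (hT s ((le_max_left T a).trans hs.1)).1.2)
    linarith
  refine ⟨_, (tendsto_atTop_ciInf hanti ⟨m, ?_⟩).congr' ?_⟩
  · rintro _ ⟨t, rfl⟩
    exact (hT _ (le_max_left T t)).2
  · filter_upwards [eventually_ge_atTop T] with t ht
    rw [max_eq_right ht]

theorem tendsto_zero_of_hasDerivAt_le_neg_mul_sq {v v' f f' : ℝ → ℝ} {K : ℝ} (hK : 0 < K)
    (hv_bdd : IsBoundedUnder (· ≥ ·) atTop v) (hv : ∀ᶠ t in atTop, HasDerivAt v (v' t) t)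
    (hv' : ∀ᶠ t in atTop, v' t ≤ -K * f t ^ 2) (hf : ∀ᶠ t in atTop, HasDerivAt f (f' t) t)
    (hf' : f' =O[atTop] fun _ => (1 : ℝ)) : Tendsto f atTop (𝓝 0) := by
  obtain ⟨l, hl⟩ := exists_tendsto_of_hasDerivAt_nonpos hv
    (hv'.mono fun t ht => ht.trans (by nlinarith [sq_nonneg (f t)])) hv_bdd
  obtain ⟨C, hC, hfC⟩ := hf'.exists_pos
  obtain ⟨T, hT⟩ := eventually_atTop.1 (hv.and (hv'.and (hf.and hfC.bound)))
  rw [Metric.tendsto_nhds]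
  intro ε hε
  set δ := ε / (2 * C) with hδ
  have hδ_pos : 0 < δ := by positivity
  have hdrop : Tendsto (fun t => v t - v (t + δ)) atTop (𝓝 0) := by
    simpa using hl.sub (hl.comp (tendsto_atTop_add_const_right _ δ tendsto_id))
  filter_upwards [eventually_ge_atTop T,
    hdrop.eventually (gt_mem_nhds (show 0 < K * (ε / 2) ^ 2 * δ by positivity))] with t ht hvt
  rw [Real.dist_eq, sub_zero]
  by_contra! hft
  -- `|f t| ≥ ε` forces `|f| ≥ ε / 2` on `[t, t + δ]`, so `v` would drop there by `K (ε / 2)² δ`.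
  have hnear : ∀ s ∈ Icc t (t + δ), ε / 2 ≤ |f s| := fun s hs => by
    have hlip := abs_sub_le_mul_sub_of_hasDerivAt hs.1
      (fun u hu => (hT u (ht.trans hu.1)).2.2.1)
      (fun u hu => by simpa using (hT u (ht.trans hu.1)).2.2.2)
    have : C * (s - t) ≤ ε / 2 := by
      calc C * (s - t) ≤ C * δ := by gcongr; linarith [hs.2]
        _ = ε / 2 := by rw [hδ]; field_simp
    have := abs_sub_abs_le_abs_sub (f t) (f s)
    rw [abs_sub_comm] at this
    linarith
  have := sub_le_mul_sub_of_hasDerivAt_le (C := -(K * (ε / 2) ^ 2)) (by linarith : t ≤ t + δ)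
    (fun s hs => (hT s (ht.trans hs.1)).1) fun s hs => by
      have h1 := (hT s (ht.trans hs.1)).2.1
      have h2 : (ε / 2) ^ 2 ≤ f s ^ 2 := by
        rw [← sq_abs (f s)]; exact pow_le_pow_left₀ (by positivity) (hnear s hs) 2
      nlinarith
  nlinarith

theorem tendsto_deriv_zero_of_tendsto_zero {f f' f'' : ℝ → ℝ}
    (hf : ∀ᶠ t in atTop, HasDerivAt f (f' t) t) (hf' : ∀ᶠ t in atTop, HasDerivAt f' (f'' t) t)
    (hf'' : f'' =O[atTop] fun _ => (1 : ℝ)) (hf0 : Tendsto f atTop (𝓝 0)) :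
    Tendsto f' atTop (𝓝 0) := by
  obtain ⟨C, hC, hfC⟩ := hf''.exists_pos
  obtain ⟨T, hT⟩ := eventually_atTop.1 (hf.and (hf'.and hfC.bound))
  rw [Metric.tendsto_nhds]
  intro ε hε
  set h := ε / (2 * C) with hh
  have hh_pos : 0 < h := by positivity
  have hincr : Tendsto (fun t => f (t + h) - f t) atTop (𝓝 0) := by
    simpa using (hf0.comp (tendsto_atTop_add_const_right _ h tendsto_id)).sub hf0
  filter_upwards [eventually_ge_atTop T,
    Metric.tendsto_nhds.1 hincr (ε * h / 2) (by positivity)] with t ht hft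
  rw [Real.dist_eq, sub_zero] at hft ⊢
  obtain ⟨ξ, hξ, hslope⟩ := exists_hasDerivAt_eq_slope f f' (by linarith : t < t + h)
    (fun s hs => (hT s (ht.trans hs.1)).1.continuousAt.continuousWithinAt)
    (fun s hs => (hT s (ht.trans hs.1.le)).1)
  have hlip := abs_sub_le_mul_sub_of_hasDerivAt hξ.1.le
    (fun s hs => (hT s (ht.trans hs.1)).2.1)
    (fun s hs => by simpa using (hT s (ht.trans hs.1)).2.2)
  have hξ_small : |f' ξ| < ε / 2 := by
    rw [hslope, add_sub_cancel_left, abs_div, abs_of_pos hh_pos, div_lt_iff₀ hh_pos]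
    linarith
  have hCh : C * (ξ - t) < ε / 2 := by
    calc C * (ξ - t) < C * h := by gcongr; linarith [hξ.2]
      _ = ε / 2 := by rw [hh]; field_simp
  have := abs_sub_abs_le_abs_sub (f' t) (f' ξ)
  rw [abs_sub_comm] at this
  linarith

end Barbalat

open Filter Topology Finset

namespace FoodChain

noncomputable def volterra (p u : ℝ) : ℝ := u - p - p * Real.log (u / p)

theorem volterra_nonneg {p u : ℝ} (hp : 0 < p) (hu : 0 < u) : 0 ≤ volterra p u := by
  have hlog := Real.log_le_sub_one_of_pos (div_pos hu hp)
  have : p * Real.log (u / p) ≤ u - p :=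
    calc p * Real.log (u / p) ≤ p * (u / p - 1) := by gcongr
      _ = u - p := by field_simp
  unfold volterra
  linarith

theorem hasDerivAt_volterra {p u : ℝ} (hp : p ≠ 0) (hu : u ≠ 0) :
    HasDerivAt (volterra p) (1 - p / u) u := by
  have hlog := (((hasDerivAt_id' u).div_const p).log (div_ne_zero hu hp)).const_mul p
  refine (((hasDerivAt_id' u).sub_const p).sub hlog).congr_deriv ?_
  field_simp

theorem le_of_volterra_le {p u B : ℝ} (hp : 0 < p) (hu : 0 < u) (h : volterra p u ≤ B) :
    u ≤ 2 * (B + p) := by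
  -- `log y ≤ y / 2 - 1 + log 2 ≤ y / 2`, so `volterra p u ≥ u / 2 - p`
  have hlog : Real.log (u / p) ≤ u / (2 * p) := by
    have h1 := Real.log_le_sub_one_of_pos (show 0 < u / (2 * p) by positivity)
    have h2 : Real.log (u / p) = Real.log (u / (2 * p)) + Real.log 2 := by
      rw [← Real.log_mul (by positivity) two_ne_zero]
      congr 1
      field_simp
    have h3 := Real.log_two_lt_d9
    norm_num at h3
    linarith
  have : p * Real.log (u / p) ≤ u / 2 :=
    calc p * Real.log (u / p) ≤ p * (u / (2 * p)) := by gcongr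
      _ = u / 2 := by field_simp
  unfold volterra at h
  linarith

theorem hasDerivAt_sum_volterra {ι : Type*} {s : Finset ι} {w p G : ι → ℝ} {y : ℝ → ι → ℝ}
    {t : ℝ} (hp : ∀ i ∈ s, p i ≠ 0)
    (hy : ∀ i ∈ s, 0 < y t i ∧ HasDerivAt (fun r => y r i) (y t i * G i) t) :
    HasDerivAt (fun r => ∑ i ∈ s, w i * volterra (p i) (y r i))
      (∑ i ∈ s, w i * ((y t i - p i) * G i)) t := by
  refine HasDerivAt.fun_sum fun i hi => ?_
  have hyi := (hy i hi).1.ne'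
  refine (((hasDerivAt_volterra (hp i hi) hyi).comp t (hy i hi).2).const_mul (w i)).congr_deriv ?_
  field_simp

noncomputable def weight (ta : ℕ → ℕ → ℝ) (i : ℕ) : ℝ :=
  ∏ j ∈ Ico 1 i, ta j (j + 1) / ta (j + 1) j

variable {n : ℕ} {ta : ℕ → ℕ → ℝ} {p : ℕ → ℝ}

theorem weight_mul_succ {i : ℕ} (hi : 1 ≤ i) (h : ta (i + 1) i ≠ 0) :
    weight ta i * ta i (i + 1) = weight ta (i + 1) * ta (i + 1) i := by
  rw [weight, weight, prod_Ico_succ_top hi]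
  field_simp

theorem weight_pos (hlow : ∀ i, 2 ≤ i → i ≤ n → 0 < ta i (i - 1))
    (hup : ∀ i, 1 ≤ i → i ≤ n - 1 → 0 < ta i (i + 1)) {i : ℕ} (hi : i ≤ n) :
    0 < weight ta i :=
  prod_pos fun j hj => by
    rw [mem_Ico] at hj
    exact div_pos (hup j hj.1 (by omega)) (by simpa using hlow (j + 1) (by omega) (by omega))

def lowerCoeff (ta : ℕ → ℕ → ℝ) (k : ℕ) : ℝ := if k = 1 then 0 else ta k (k - 1)

def upperCoeff (n : ℕ) (ta : ℕ → ℕ → ℝ) (k : ℕ) : ℝ := if k = n then 0 else ta k (k + 1)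

theorem Ft_sub_Ft (hn : n ≠ 1) (y z : ℕ → ℝ) (k : ℕ) :
    Ft n ta y k - Ft n ta z k = lowerCoeff ta k * (y (k - 1) - z (k - 1))
      - ta k k * (y k - z k) - upperCoeff n ta k * (y (k + 1) - z (k + 1)) := by
  unfold Ft lowerCoeff upperCoeff
  split_ifs <;> subst_vars <;> first | omega | ring

theorem sum_lowerCoeff_eq_sum_upperCoeff {w e : ℕ → ℝ}
    (hw : ∀ i, 1 ≤ i → i < n → w i * ta i (i + 1) = w (i + 1) * ta (i + 1) i) :
    ∑ i ∈ Icc 1 n, w i * lowerCoeff ta i * e (i - 1) * e i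
      = ∑ i ∈ Icc 1 n, w i * upperCoeff n ta i * e i * e (i + 1) := by
  obtain _ | m := n
  · rfl
  -- reindex by `i ↦ i + 1`; the term `i = 1` on the left and `i = n` on the right vanish
  have hshift : ∀ i ∈ Icc 1 m, w (i + 1) * lowerCoeff ta (i + 1) * e (i + 1 - 1) * e (i + 1)
      = w i * upperCoeff (m + 1) ta i * e i * e (i + 1) := fun i hi => by
    rw [mem_Icc] at hi
    rw [lowerCoeff, upperCoeff, if_neg (by omega), if_neg (by omega), Nat.add_sub_cancel,
      ← hw i hi.1 (by omega)]
  conv_rhs => rw [sum_Icc_succ_top (by omega), ← sum_congr rfl hshift]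
  rw [Icc_eq_cons_Ioc (by omega), sum_cons, ← Icc_add_one_left_eq_Ioc, ← map_add_right_Icc,
    sum_map]
  simp [lowerCoeff, upperCoeff]

noncomputable def dissipation (n : ℕ) (ta : ℕ → ℕ → ℝ) (p y : ℕ → ℝ) : ℝ :=
  ∑ i ∈ Icc 1 n, weight ta i * ta i i * (y i - p i) ^ 2

theorem sum_weight_mul_Ft (hn : n ≠ 1)
    (hlow : ∀ i, 2 ≤ i → i ≤ n → 0 < ta i (i - 1))
    (hzero : ∀ i, 1 ≤ i → i ≤ n → Ft n ta p i = 0) (y : ℕ → ℝ) :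
    ∑ i ∈ Icc 1 n, weight ta i * ((y i - p i) * Ft n ta y i) = -dissipation n ta p y := by
  set e := fun i => y i - p i
  have hcross := sum_lowerCoeff_eq_sum_upperCoeff (n := n) (ta := ta) (w := weight ta) (e := e)
    fun i hi _ => weight_mul_succ hi (by simpa using (hlow (i + 1) (by omega) (by omega)).ne')
  calc ∑ i ∈ Icc 1 n, weight ta i * ((y i - p i) * Ft n ta y i)
      = ∑ i ∈ Icc 1 n, (weight ta i * lowerCoeff ta i * e (i - 1) * e i
          - weight ta i * ta i i * e i ^ 2 - weight ta i * upperCoeff n ta i * e i * e (i + 1)) :=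
        sum_congr rfl fun i hi => by
          rw [mem_Icc] at hi
          rw [← sub_zero (Ft n ta y i), ← hzero i hi.1 hi.2, Ft_sub_Ft hn]
          ring
    _ = -dissipation n ta p y := by
        rw [sum_sub_distrib, sum_sub_distrib, hcross, dissipation]
        ring

noncomputable def lyapunov (n : ℕ) (ta : ℕ → ℕ → ℝ) (p y : ℕ → ℝ) : ℝ :=
  ∑ i ∈ Icc 1 n, weight ta i * volterra (p i) (y i)

-- `Ft n ta · k` is affine, so its derivative along `y` is its linear part evaluated at `y'`.
theorem hasDerivAt_Ft_comp (hn : 2 ≤ n) {y : ℝ → ℕ → ℝ} {y' : ℕ → ℝ} {t : ℝ} {k : ℕ}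
    (hk : 1 ≤ k) (hkn : k ≤ n)
    (hy : ∀ j, 1 ≤ j → j ≤ n → HasDerivAt (fun s => y s j) (y' j) t) :
    HasDerivAt (fun s => Ft n ta (y s) k) (Ft n ta y' k - Ft n ta 0 k) t := by
  unfold Ft
  split_ifs with h1 h2
  · subst h1
    refine (((hasDerivAt_const t _).sub ((hy 1 le_rfl (by omega)).const_mul _)).sub
      ((hy 2 (by omega) hn).const_mul _)).congr_deriv ?_
    simp only [Pi.zero_apply]
    ring
  · subst h2
    refine (((hasDerivAt_const t _).add ((hy (k - 1) (by omega) (by omega)).const_mul _)).sub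
      ((hy k hk le_rfl).const_mul _)).congr_deriv ?_
    simp only [Pi.zero_apply]
    ring
  · refine ((((hasDerivAt_const t _).add ((hy (k - 1) (by omega) (by omega)).const_mul _)).sub
      ((hy k hk hkn).const_mul _)).sub
      ((hy (k + 1) (by omega) (by omega)).const_mul _)).congr_deriv ?_
    simp only [Pi.zero_apply]
    ring

theorem isBigO_Ft_comp {α : Type*} {l : Filter α} (hn : 2 ≤ n) {y : α → ℕ → ℝ} {k : ℕ}
    (hk : 1 ≤ k) (hkn : k ≤ n)
    (hy : ∀ j, 1 ≤ j → j ≤ n → (fun s => y s j) =O[l] fun _ => (1 : ℝ)) :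
    (fun s => Ft n ta (y s) k) =O[l] fun _ => (1 : ℝ) := by
  unfold Ft
  split_ifs with h1 h2
  · subst h1
    exact ((Asymptotics.isBigO_const_one _ _ _).sub
      ((hy 1 le_rfl (by omega)).const_mul_left _)).sub ((hy 2 (by omega) hn).const_mul_left _)
  · subst h2
    exact ((Asymptotics.isBigO_const_one _ _ _).add
      ((hy (k - 1) (by omega) (by omega)).const_mul_left _)).sub ((hy k hk le_rfl).const_mul_left _)
  · exact (((Asymptotics.isBigO_const_one _ _ _).add
      ((hy (k - 1) (by omega) (by omega)).const_mul_left _)).sub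
      ((hy k hk hkn).const_mul_left _)).sub ((hy (k + 1) (by omega) (by omega)).const_mul_left _)

theorem weight_mul_volterra_nonneg (hw : ∀ i, 1 ≤ i → i ≤ n → 0 < weight ta i)
    (hpos : ∀ i, 1 ≤ i → i ≤ n → 0 < p i) {y : ℕ → ℝ} (hy : ∀ i, 1 ≤ i → i ≤ n → 0 < y i)
    {i : ℕ} (hi : i ∈ Icc 1 n) : 0 ≤ weight ta i * volterra (p i) (y i) := by
  rw [mem_Icc] at hi
  exact mul_nonneg (hw i hi.1 hi.2).le (volterra_nonneg (hpos i hi.1 hi.2) (hy i hi.1 hi.2))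

theorem lyapunov_nonneg (hw : ∀ i, 1 ≤ i → i ≤ n → 0 < weight ta i)
    (hpos : ∀ i, 1 ≤ i → i ≤ n → 0 < p i) {y : ℕ → ℝ} (hy : ∀ i, 1 ≤ i → i ≤ n → 0 < y i) :
    0 ≤ lyapunov n ta p y :=
  sum_nonneg fun _ hi => weight_mul_volterra_nonneg hw hpos hy hi

theorem weight_mul_volterra_le_lyapunov (hw : ∀ i, 1 ≤ i → i ≤ n → 0 < weight ta i)
    (hpos : ∀ i, 1 ≤ i → i ≤ n → 0 < p i) {y : ℕ → ℝ} (hy : ∀ i, 1 ≤ i → i ≤ n → 0 < y i)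
    {i : ℕ} (hi : i ∈ Icc 1 n) : weight ta i * volterra (p i) (y i) ≤ lyapunov n ta p y :=
  single_le_sum (f := fun i => weight ta i * volterra (p i) (y i))
    (fun _ hj => weight_mul_volterra_nonneg hw hpos hy hj) hi

theorem weight_mul_diag_mul_sq_nonneg (hw : ∀ i, 1 ≤ i → i ≤ n → 0 < weight ta i)
    (hdiag : ∀ i, 1 ≤ i → i ≤ n → 0 ≤ ta i i) (y : ℕ → ℝ) {i : ℕ} (hi : i ∈ Icc 1 n) :
    0 ≤ weight ta i * ta i i * (y i - p i) ^ 2 := by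
  rw [mem_Icc] at hi
  have := hw i hi.1 hi.2
  have := hdiag i hi.1 hi.2
  positivity

theorem dissipation_nonneg (hw : ∀ i, 1 ≤ i → i ≤ n → 0 < weight ta i)
    (hdiag : ∀ i, 1 ≤ i → i ≤ n → 0 ≤ ta i i) (y : ℕ → ℝ) : 0 ≤ dissipation n ta p y :=
  sum_nonneg fun _ hi => weight_mul_diag_mul_sq_nonneg hw hdiag y hi

theorem weight_one_mul_sq_le_dissipation (hn : 1 ≤ n)
    (hw : ∀ i, 1 ≤ i → i ≤ n → 0 < weight ta i) (hdiag : ∀ i, 1 ≤ i → i ≤ n → 0 ≤ ta i i)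
    (y : ℕ → ℝ) : weight ta 1 * ta 1 1 * (y 1 - p 1) ^ 2 ≤ dissipation n ta p y :=
  single_le_sum (f := fun i => weight ta i * ta i i * (y i - p i) ^ 2)
    (fun _ hi => weight_mul_diag_mul_sq_nonneg hw hdiag y hi) (mem_Icc.2 ⟨le_rfl, hn⟩)

theorem isBigO_mul_Ft_comp (hn : 2 ≤ n) {x : ℝ → ℕ → ℝ}
    (hbdd : ∀ i, 1 ≤ i → i ≤ n → (fun t => x t i) =O[atTop] fun _ => (1 : ℝ)) :
    ∀ k, 1 ≤ k → k ≤ n → (fun t => x t k * Ft n ta (x t) k) =O[atTop] fun _ => (1 : ℝ) :=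
  fun k hk hkn => by simpa using (hbdd k hk hkn).mul (isBigO_Ft_comp hn hk hkn hbdd)

def IsEventuallyPositiveSolution (n : ℕ) (ta : ℕ → ℕ → ℝ) (x : ℝ → ℕ → ℝ) : Prop :=
  ∀ᶠ t in atTop, ∀ i, 1 ≤ i → i ≤ n →
    0 < x t i ∧ HasDerivAt (fun s => x s i) (x t i * Ft n ta (x t) i) t

namespace IsEventuallyPositiveSolution

variable {x : ℝ → ℕ → ℝ}

theorem hasDerivAt_lyapunov (hx : IsEventuallyPositiveSolution n ta x) (hn : n ≠ 1)
    (hlow : ∀ i, 2 ≤ i → i ≤ n → 0 < ta i (i - 1)) (hpos : ∀ i, 1 ≤ i → i ≤ n → 0 < p i)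
    (hzero : ∀ i, 1 ≤ i → i ≤ n → Ft n ta p i = 0) :
    ∀ᶠ t in atTop,
      HasDerivAt (fun s => lyapunov n ta p (x s)) (-dissipation n ta p (x t)) t :=
  hx.mono fun t ht => sum_weight_mul_Ft hn hlow hzero (x t) ▸
    hasDerivAt_sum_volterra (fun i hi => (hpos i (mem_Icc.1 hi).1 (mem_Icc.1 hi).2).ne')
      fun i hi => ht i (mem_Icc.1 hi).1 (mem_Icc.1 hi).2

theorem isBoundedUnder_ge_lyapunov (hx : IsEventuallyPositiveSolution n ta x)
    (hw : ∀ i, 1 ≤ i → i ≤ n → 0 < weight ta i) (hpos : ∀ i, 1 ≤ i → i ≤ n → 0 < p i) :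
    IsBoundedUnder (· ≥ ·) atTop fun t => lyapunov n ta p (x t) :=
  isBoundedUnder_of_eventually_ge <|
    hx.mono fun _ ht => lyapunov_nonneg hw hpos fun i hi hin => (ht i hi hin).1

theorem isBigO_one (hx : IsEventuallyPositiveSolution n ta x) (hn : n ≠ 1)
    (hlow : ∀ i, 2 ≤ i → i ≤ n → 0 < ta i (i - 1)) (hpos : ∀ i, 1 ≤ i → i ≤ n → 0 < p i)
    (hzero : ∀ i, 1 ≤ i → i ≤ n → Ft n ta p i = 0) (hw : ∀ i, 1 ≤ i → i ≤ n → 0 < weight ta i)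
    (hdiag : ∀ i, 1 ≤ i → i ≤ n → 0 ≤ ta i i) :
    ∀ i, 1 ≤ i → i ≤ n → (fun t => x t i) =O[atTop] fun _ => (1 : ℝ) := by
  obtain ⟨l, hl⟩ := exists_tendsto_of_hasDerivAt_nonpos (hx.hasDerivAt_lyapunov hn hlow hpos hzero)
    (Eventually.of_forall fun t => neg_nonpos.2 (dissipation_nonneg hw hdiag (x t)))
    (hx.isBoundedUnder_ge_lyapunov hw hpos)
  obtain ⟨B, hB⟩ := hl.isBoundedUnder_le
  intro i hi hin
  refine (Asymptotics.isBigO_one_iff ℝ).2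
    (isBoundedUnder_of_eventually_le (a := 2 * (B / weight ta i + p i)) ?_)
  filter_upwards [hx, eventually_map.1 hB] with t ht htB
  have hxi := (ht i hi hin).1
  rw [Real.norm_eq_abs, abs_of_pos hxi]
  refine le_of_volterra_le (hpos i hi hin) hxi ((le_div_iff₀' (hw i hi hin)).2 ?_)
  exact (weight_mul_volterra_le_lyapunov hw hpos (fun j hj hjn => (ht j hj hjn).1)
    (mem_Icc.2 ⟨hi, hin⟩)).trans htB

theorem tendsto_Ft_zero (hx : IsEventuallyPositiveSolution n ta x) (hn : 2 ≤ n)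
    (hbdd : ∀ i, 1 ≤ i → i ≤ n → (fun t => x t i) =O[atTop] fun _ => (1 : ℝ))
    {k : ℕ} (hk : 1 ≤ k) (hkn : k ≤ n) (hxk : Tendsto (fun t => x t k) atTop (𝓝 (p k)))
    (hpk : p k ≠ 0) : Tendsto (fun t => Ft n ta (x t) k) atTop (𝓝 0) := by
  set x' : ℝ → ℕ → ℝ := fun t j => x t j * Ft n ta (x t) j
  have hx'' : ∀ᶠ t in atTop, HasDerivAt (fun s => x' s k)
      (x' t k * Ft n ta (x t) k + x t k * (Ft n ta (x' t) k - Ft n ta 0 k)) t :=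
    hx.mono fun t ht =>
      (ht k hk hkn).2.mul (hasDerivAt_Ft_comp hn hk hkn fun j hj hjn => (ht j hj hjn).2)
  have hx''_bdd : (fun t => x' t k * Ft n ta (x t) k
      + x t k * (Ft n ta (x' t) k - Ft n ta 0 k)) =O[atTop] fun _ => (1 : ℝ) := by
    have hx'_bdd := isBigO_mul_Ft_comp (ta := ta) hn hbdd
    simpa using ((hx'_bdd k hk hkn).mul (isBigO_Ft_comp hn hk hkn hbdd)).add
      ((hbdd k hk hkn).mul ((isBigO_Ft_comp hn hk hkn hx'_bdd).sub
        (Asymptotics.isBigO_const_one _ _ _)))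
  -- Barbalat: `x_k - p_k → 0` with bounded second derivative, so `x_k' = x_k F_k(x) → 0`
  have hx'k := tendsto_deriv_zero_of_tendsto_zero
    (hx.mono fun t ht => ((ht k hk hkn).2.sub_const (p k))) hx'' hx''_bdd
    (tendsto_sub_nhds_zero_iff.2 hxk)
  simpa using (hx'k.div hxk hpk).congr'
    (hx.mono fun t ht => mul_div_cancel_left₀ _ (ht k hk hkn).1.ne')

theorem tendsto_one (hx : IsEventuallyPositiveSolution n ta x) (hn : 2 ≤ n) (h11 : 0 < ta 1 1)
    (hlow : ∀ i, 2 ≤ i → i ≤ n → 0 < ta i (i - 1)) (hpos : ∀ i, 1 ≤ i → i ≤ n → 0 < p i)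
    (hzero : ∀ i, 1 ≤ i → i ≤ n → Ft n ta p i = 0) (hw : ∀ i, 1 ≤ i → i ≤ n → 0 < weight ta i)
    (hdiag : ∀ i, 1 ≤ i → i ≤ n → 0 ≤ ta i i)
    (hbdd : ∀ i, 1 ≤ i → i ≤ n → (fun t => x t i) =O[atTop] fun _ => (1 : ℝ)) :
    Tendsto (fun t => x t 1) atTop (𝓝 (p 1)) :=
  tendsto_sub_nhds_zero_iff.1 <| tendsto_zero_of_hasDerivAt_le_neg_mul_sq
    (mul_pos (hw 1 le_rfl (by omega)) h11) (hx.isBoundedUnder_ge_lyapunov hw hpos)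
    (hx.hasDerivAt_lyapunov (by omega) hlow hpos hzero)
    (Eventually.of_forall fun t => by
      linarith [weight_one_mul_sq_le_dissipation (p := p) (by omega) hw hdiag (x t)])
    (hx.mono fun t ht => (ht 1 le_rfl (by omega)).2.sub_const (p 1))
    (isBigO_mul_Ft_comp hn hbdd 1 le_rfl (by omega))

theorem tendsto_succ (hx : IsEventuallyPositiveSolution n ta x) (hn : 2 ≤ n)
    (hup : ∀ i, 1 ≤ i → i ≤ n - 1 → 0 < ta i (i + 1)) (hpos : ∀ i, 1 ≤ i → i ≤ n → 0 < p i)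
    (hzero : ∀ i, 1 ≤ i → i ≤ n → Ft n ta p i = 0)
    (hbdd : ∀ i, 1 ≤ i → i ≤ n → (fun t => x t i) =O[atTop] fun _ => (1 : ℝ))
    {k : ℕ} (hk : 1 ≤ k) (hkn : k < n)
    (ih : ∀ j, 1 ≤ j → j ≤ k → Tendsto (fun t => x t j) atTop (𝓝 (p j))) :
    Tendsto (fun t => x t (k + 1)) atTop (𝓝 (p (k + 1))) := by
  have hF := hx.tendsto_Ft_zero hn hbdd hk hkn.le (ih k hk le_rfl) (hpos k hk hkn.le).ne'
  have hprev : Tendsto (fun t => lowerCoeff ta k * (x t (k - 1) - p (k - 1))) atTop (𝓝 0) := by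
    rcases eq_or_ne k 1 with rfl | hk1
    · simp [lowerCoeff]
    · simpa using ((ih (k - 1) (by omega) (by omega)).sub_const (p (k - 1))).const_mul
        (lowerCoeff ta k)
  have hsolve : ∀ t, p (k + 1) + (lowerCoeff ta k * (x t (k - 1) - p (k - 1))
      - ta k k * (x t k - p k) - Ft n ta (x t) k) / ta k (k + 1) = x t (k + 1) := fun t => by
    have := Ft_sub_Ft (n := n) (ta := ta) (by omega) (x t) p k
    rw [hzero k hk hkn.le, upperCoeff, if_neg hkn.ne] at this
    field_simp [(hup k hk (by omega)).ne']
    linarith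
  refine Tendsto.congr hsolve ?_
  simpa using (((hprev.sub (((ih k hk le_rfl).sub_const (p k)).const_mul (ta k k))).sub
    hF).div_const (ta k (k + 1))).const_add (p (k + 1))

end IsEventuallyPositiveSolution

end FoodChain

theorem stmt15_general (n : ℕ) (hn : 2 ≤ n) (ta : ℕ → ℕ → ℝ)
    (h11 : 0 < ta 1 1)
    (hii : ∀ i, 2 ≤ i → i ≤ n → 0 ≤ ta i i)
    (hlow : ∀ i, 2 ≤ i → i ≤ n → 0 < ta i (i - 1))
    (hup : ∀ i, 1 ≤ i → i ≤ n - 1 → 0 < ta i (i + 1))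
    (pstar : ℕ → ℝ)
    (hpos : ∀ i, 1 ≤ i → i ≤ n → 0 < pstar i)
    (hzero : ∀ i, 1 ≤ i → i ≤ n → Ft n ta pstar i = 0)
    (x : ℝ → ℕ → ℝ)
    (hx_pos : ∀ t, 0 ≤ t → ∀ i, 1 ≤ i → i ≤ n → 0 < x t i)
    (hx_ode : ∀ i, 1 ≤ i → i ≤ n → ∀ t, 0 ≤ t →
      HasDerivWithinAt (fun s => x s i) (x t i * Ft n ta (x t) i) (Set.Ici 0) t) :
    ∀ i, 1 ≤ i → i ≤ n →
      Filter.Tendsto (fun t => x t i) Filter.atTop (nhds (pstar i)) := by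
  open FoodChain in
  have hsol : IsEventuallyPositiveSolution n ta x := by
    filter_upwards [eventually_gt_atTop 0] with t ht i hi hin
    exact ⟨hx_pos t ht.le i hi hin, (hx_ode i hi hin t ht.le).hasDerivAt (Ici_mem_nhds ht)⟩
  have hw : ∀ i, 1 ≤ i → i ≤ n → 0 < weight ta i := fun i _ hin => weight_pos hlow hup hin
  have hdiag : ∀ i, 1 ≤ i → i ≤ n → 0 ≤ ta i i := fun i hi hin => by
    rcases eq_or_ne i 1 with rfl | hi1
    exacts [h11.le, hii i (by omega) hin]
  have hbdd := hsol.isBigO_one (by omega) hlow hpos hzero hw hdiag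
  intro i
  induction i using Nat.strong_induction_on with
  | _ i ih =>
    intro hi hin
    rcases eq_or_ne i 1 with rfl | hi1
    · exact hsol.tendsto_one hn h11 hlow hpos hzero hw hdiag hbdd
    · obtain ⟨k, rfl⟩ : ∃ k, i = k + 1 := ⟨i - 1, by omega⟩
      exact hsol.tendsto_succ hn hup hpos hzero hbdd (by omega) hin
        fun j hj hjk => ih j (by omega) hj (by omega)

/-- Global asymptotic stability of the positive equilibrium `p*` of the deterministic
Lotka–Volterra food chain when `δ̃(n) > 0`: every differentiable positive solution of
`x_i' = x_i F̃_i(x)` on `[0,∞)` converges to `p*`. -/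
theorem stmt15 (n : ℕ) (hn : 2 ≤ n) (ta : ℕ → ℕ → ℝ)
    (hi0 : ∀ i, 2 ≤ i → i ≤ n → 0 < ta i 0)
    (h11 : 0 < ta 1 1)
    (hii : ∀ i, 2 ≤ i → i ≤ n → 0 ≤ ta i i)
    (hlow : ∀ i, 2 ≤ i → i ≤ n → 0 < ta i (i - 1))
    (hup : ∀ i, 1 ≤ i → i ≤ n - 1 → 0 < ta i (i + 1))
    (hdelta : 0 < deltaT ta n)
    (pstar : ℕ → ℝ)
    (hpos : ∀ i, 1 ≤ i → i ≤ n → 0 < pstar i)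
    (hzero : ∀ i, 1 ≤ i → i ≤ n → Ft n ta pstar i = 0)
    (x : ℝ → ℕ → ℝ)
    (hx_pos : ∀ t, 0 ≤ t → ∀ i, 1 ≤ i → i ≤ n → 0 < x t i)
    (hx_ode : ∀ i, 1 ≤ i → i ≤ n → ∀ t, 0 ≤ t →
      HasDerivWithinAt (fun s => x s i) (x t i * Ft n ta (x t) i) (Set.Ici 0) t) :
    ∀ i, 1 ≤ i → i ≤ n →
      Filter.Tendsto (fun t => x t i) Filter.atTop (nhds (pstar i)) :=
  stmt15_general n hn ta h11 hii hlow hup pstar hpos hzero x hx_pos hx_ode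
end

section
/- For every x ∈ ℝ_{++}^n and every 1 ≤ k ≤ n, the iterated Lie brackets b^k satisfy the triangular structure: b^k_j(x) = 0 for every j > k, and the k-th component equals b^k_k(x) = σ₁ x₁ Π_{i=2}^{k} ã_{i,i−1} x_i. -/
/-- View `x ∈ ℝ^n` (indexed by `Fin n`) as a function on species labels `1, …, n`. -/
def toFun (n : ℕ) (x : Fin n → ℝ) : ℕ → ℝ :=
  fun j => if h : 1 ≤ j ∧ j ≤ n then x ⟨j - 1, by omega⟩ else 0

/-- The drift vector field `A⁰(x) = (x₁F̃₁(x), …, x_nF̃_n(x))`. -/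
def A0 (n : ℕ) (ta : ℕ → ℕ → ℝ) (x : Fin n → ℝ) : Fin n → ℝ :=
  fun i => x i * Ft n ta (toFun n x) ((i : ℕ) + 1)

/-- The Lie bracket `[V,W](x) = DW(x)V(x) − DV(x)W(x)` of two vector fields on `ℝ^n`. -/
noncomputable def lieB {n : ℕ} (V W : (Fin n → ℝ) → Fin n → ℝ) :
    (Fin n → ℝ) → Fin n → ℝ :=
  fun x => fderiv ℝ W x (V x) - fderiv ℝ V x (W x)

/-- The noise vector field `A¹(x) = σ₁x₁e₁`. -/
def A1 (n : ℕ) (σ1 : ℝ) (x : Fin n → ℝ) : Fin n → ℝ :=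
  fun i => if (i : ℕ) = 0 then σ1 * x i else 0

/-- The iterated brackets `b¹ = A¹`, `b^{k+1} = [b^k, A⁰]`. -/
noncomputable def bF (n : ℕ) (ta : ℕ → ℕ → ℝ) (σ1 : ℝ) : ℕ → (Fin n → ℝ) → Fin n → ℝ
  | 0 => A1 n σ1
  | 1 => A1 n σ1
  | (k + 2) => lieB (bF n ta σ1 (k + 1)) (A0 n ta)

set_option linter.unnecessarySeqFocus false in
lemma toFun_eq (n : ℕ) (x : Fin n → ℝ) (m : ℕ) (h1 : 1 ≤ m) (h2 : m ≤ n) :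
    toFun n x m = x ⟨m - 1, by omega⟩ := dif_pos ⟨h1, h2⟩

lemma toFun_smooth (n m : ℕ) : ContDiff ℝ (⊤ : ℕ∞) (fun x : Fin n → ℝ => toFun n x m) := by
  by_cases h : 1 ≤ m ∧ m ≤ n
  · simp only [toFun, dif_pos h]
    exact (ContinuousLinearMap.proj (R := ℝ) (φ := fun _ : Fin n => ℝ) ⟨m - 1, by omega⟩).contDiff
  · simp only [toFun, dif_neg h]; exact contDiff_const

lemma A1_smooth (n : ℕ) (σ1 : ℝ) : ContDiff ℝ (⊤ : ℕ∞) (A1 n σ1) := by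
  apply contDiff_pi.2
  intro i
  rcases eq_or_ne ((i : ℕ)) 0 with h | h
  · simp only [A1, h, if_true]
    exact contDiff_const.mul (ContinuousLinearMap.proj (R := ℝ) (φ := fun _ : Fin n => ℝ) i).contDiff
  · simp only [A1, h, if_false]; exact contDiff_const

lemma Ft_comp_smooth (n : ℕ) (ta : ℕ → ℕ → ℝ) (m : ℕ) :
    ContDiff ℝ (⊤ : ℕ∞) (fun x : Fin n → ℝ => Ft n ta (toFun n x) m) := by
  rcases eq_or_ne m 1 with h1 | h1
  · simp only [Ft, h1, if_true]
    exact (contDiff_const.sub (contDiff_const.mul (toFun_smooth n 1))).sub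
      (contDiff_const.mul (toFun_smooth n 2))
  · rcases eq_or_ne m n with h2 | h2
    · simp only [Ft, if_neg h1, if_pos h2]
      exact (contDiff_const.add (contDiff_const.mul (toFun_smooth n (n-1)))).sub
        (contDiff_const.mul (toFun_smooth n n))
    · simp only [Ft, if_neg h1, if_neg h2]
      exact ((contDiff_const.add (contDiff_const.mul (toFun_smooth n (m-1)))).sub
        (contDiff_const.mul (toFun_smooth n m))).sub
        (contDiff_const.mul (toFun_smooth n (m+1)))

lemma A0_smooth (n : ℕ) (ta : ℕ → ℕ → ℝ) : ContDiff ℝ (⊤ : ℕ∞) (A0 n ta) := by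
  apply contDiff_pi.2
  intro i
  exact (ContinuousLinearMap.proj (R := ℝ) (φ := fun _ : Fin n => ℝ) i).contDiff.mul
    (Ft_comp_smooth n ta ((i : ℕ) + 1))

lemma lieB_smooth {n : ℕ} (V W : (Fin n → ℝ) → Fin n → ℝ)
    (hV : ContDiff ℝ (⊤ : ℕ∞) V) (hW : ContDiff ℝ (⊤ : ℕ∞) W) : ContDiff ℝ (⊤ : ℕ∞) (lieB V W) :=
  ((hW.fderiv_right (mod_cast le_top)).clm_apply hV).sub ((hV.fderiv_right (mod_cast le_top)).clm_apply hW)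

lemma bF_smooth (n : ℕ) (ta : ℕ → ℕ → ℝ) (σ1 : ℝ) (k : ℕ) :
    ContDiff ℝ (⊤ : ℕ∞) (bF n ta σ1 k) := by
  induction k with
  | zero => exact A1_smooth n σ1
  | succ m ih =>
    match m, ih with
    | 0, _ => exact A1_smooth n σ1
    | (l+1), ih => exact lieB_smooth _ _ ih (A0_smooth n ta)

lemma fderiv_comp_apply {n : ℕ} (W : (Fin n → ℝ) → Fin n → ℝ) (x v : Fin n → ℝ)
    (hW : ∀ j : Fin n, DifferentiableAt ℝ (fun y => W y j) x) (j : Fin n) :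
    fderiv ℝ W x v j = fderiv ℝ (fun y => W y j) x v := by
  have h : fderiv ℝ W x = ContinuousLinearMap.pi (fun j => fderiv ℝ (fun y => W y j) x) :=
    fderiv_pi hW
  rw [h, ContinuousLinearMap.pi_apply]

noncomputable def prj (n : ℕ) (i : Fin n) : (Fin n → ℝ) →L[ℝ] ℝ :=
  ContinuousLinearMap.proj i

lemma prj_hasFDerivAt (n : ℕ) (i : Fin n) (x : Fin n → ℝ) :
    HasFDerivAt (fun y : Fin n → ℝ => y i) (prj n i) x :=
  (ContinuousLinearMap.proj (R:=ℝ) (φ := fun _ : Fin n => ℝ) i).hasFDerivAt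

@[simp] lemma prj_apply (n : ℕ) (i : Fin n) (v : Fin n → ℝ) : prj n i v = v i := rfl

lemma A0_fderiv_apply (n : ℕ) (ta : ℕ → ℕ → ℝ) (x v : Fin n → ℝ) (i : Fin n)
    (h1 : 1 ≤ (i : ℕ)) (hv : ∀ p : Fin n, (i : ℕ) ≤ (p : ℕ) → v p = 0) :
    fderiv ℝ (fun y => A0 n ta y i) x v
      = x i * (ta ((i : ℕ) + 1) (i : ℕ) * v ⟨(i : ℕ) - 1, Nat.lt_of_le_of_lt (Nat.sub_le _ _) i.isLt⟩) := by
  have hin := i.isLt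
  have hp : (i : ℕ) - 1 < n := Nat.lt_of_le_of_lt (Nat.sub_le _ _) i.isLt
  rcases eq_or_lt_of_le (Nat.succ_le_of_lt hin) with hcase | hcase
  · -- last component : (i:ℕ)+1 = n
    have hn2 : 2 ≤ n := by omega
    have hq : n - 1 < n := by omega
    have hq2 : n - 1 - 1 < n := by omega
    have hfun : (fun y : Fin n → ℝ => A0 n ta y i)
        = fun y => y i * (-ta n 0 + ta n (n-1) * y ⟨n-1-1, hq2⟩ - ta n n * y ⟨n-1, hq⟩) := by
      funext y
      show y i * Ft n ta (toFun n y) ((i : ℕ) + 1) = _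
      simp only [Ft]
      rw [if_neg (by omega : ¬((i : ℕ) + 1 = 1)), if_pos hcase]
      rw [toFun_eq n y (n-1) (by omega) (by omega), toFun_eq n y n (by omega) le_rfl]
    rw [hfun]
    have hc : HasFDerivAt (fun y : Fin n → ℝ => y i) (prj n i) x :=
      prj_hasFDerivAt n i x
    have hd : HasFDerivAt
        (fun y : Fin n → ℝ => -ta n 0 + ta n (n-1) * y ⟨n-1-1, hq2⟩ - ta n n * y ⟨n-1, hq⟩)
        ((0 : (Fin n → ℝ) →L[ℝ] ℝ) + ta n (n-1) • prj n ⟨n-1-1, hq2⟩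
          - ta n n • prj n ⟨n-1, hq⟩) x :=
      ((hasFDerivAt_const _ _).add
        ((prj_hasFDerivAt n _ x).const_mul _)).sub
        ((prj_hasFDerivAt n _ x).const_mul _)
    erw [(hc.mul hd).fderiv]
    have hvi : v i = 0 := hv i le_rfl
    have hvq : v ⟨n-1, hq⟩ = 0 := hv _ (by show (i:ℕ) ≤ n - 1; omega)
    have e1 : ta n (n-1) = ta ((i : ℕ) + 1) ((i : ℕ)) := by
      have h3 : n = (i:ℕ)+1 := hcase.symm
      congr 1 <;> omega
    have e2 : (⟨n-1-1, hq2⟩ : Fin n) = ⟨(i : ℕ) - 1, hp⟩ := by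
      simp only [Fin.mk.injEq]; omega
    simp only [ContinuousLinearMap.add_apply, ContinuousLinearMap.sub_apply,
      ContinuousLinearMap.smul_apply, prj_apply,
      ContinuousLinearMap.zero_apply, smul_eq_mul, hvi, hvq, e2, e1]
    ring
  · -- middle component : (i:ℕ)+1 < n
    have hq : (i : ℕ) + 1 < n := hcase
    have hfun : (fun y : Fin n → ℝ => A0 n ta y i)
        = fun y => y i * (-ta ((i:ℕ)+1) 0 + ta ((i:ℕ)+1) ((i:ℕ)+1-1) * y ⟨(i:ℕ)+1-1-1, by omega⟩
            - ta ((i:ℕ)+1) ((i:ℕ)+1) * y ⟨(i:ℕ)+1-1, by omega⟩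
            - ta ((i:ℕ)+1) ((i:ℕ)+1+1) * y ⟨(i:ℕ)+1+1-1, by omega⟩) := by
      funext y
      show y i * Ft n ta (toFun n y) ((i : ℕ) + 1) = _
      simp only [Ft]
      rw [if_neg (by omega : ¬((i : ℕ) + 1 = 1)), if_neg (by omega : ¬((i : ℕ) + 1 = n))]
      rw [toFun_eq n y ((i:ℕ)+1-1) (by omega) (by omega),
          toFun_eq n y ((i:ℕ)+1) (by omega) (by omega),
          toFun_eq n y ((i:ℕ)+1+1) (by omega) (by omega)]
    rw [hfun]
    have hc : HasFDerivAt (fun y : Fin n → ℝ => y i) (prj n i) x :=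
      prj_hasFDerivAt n i x
    have hd : HasFDerivAt
        (fun y : Fin n → ℝ => -ta ((i:ℕ)+1) 0 + ta ((i:ℕ)+1) ((i:ℕ)+1-1) * y ⟨(i:ℕ)+1-1-1, by omega⟩
            - ta ((i:ℕ)+1) ((i:ℕ)+1) * y ⟨(i:ℕ)+1-1, by omega⟩
            - ta ((i:ℕ)+1) ((i:ℕ)+1+1) * y ⟨(i:ℕ)+1+1-1, by omega⟩)
        ((0 : (Fin n → ℝ) →L[ℝ] ℝ)
          + ta ((i:ℕ)+1) ((i:ℕ)+1-1) • prj n ⟨(i:ℕ)+1-1-1, by omega⟩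
          - ta ((i:ℕ)+1) ((i:ℕ)+1) • prj n ⟨(i:ℕ)+1-1, by omega⟩
          - ta ((i:ℕ)+1) ((i:ℕ)+1+1) • prj n ⟨(i:ℕ)+1+1-1, by omega⟩) x :=
      (((hasFDerivAt_const _ _).add
        ((prj_hasFDerivAt n _ x).const_mul _)).sub
        ((prj_hasFDerivAt n _ x).const_mul _)).sub
        ((prj_hasFDerivAt n _ x).const_mul _)
    erw [(hc.mul hd).fderiv]
    have hvi : v i = 0 := hv i le_rfl
    have hvm : v ⟨(i:ℕ)+1-1, by omega⟩ = 0 := hv _ (by show (i:ℕ) ≤ (i:ℕ)+1-1; omega)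
    have hvq : v ⟨(i:ℕ)+1+1-1, by omega⟩ = 0 := hv _ (by show (i:ℕ) ≤ (i:ℕ)+1+1-1; omega)
    have e2 : (⟨(i:ℕ)+1-1-1, by omega⟩ : Fin n) = ⟨(i : ℕ) - 1, hp⟩ := by
      simp only [Fin.mk.injEq]; omega
    have e1 : ta ((i : ℕ) + 1) ((i:ℕ)+1-1) = ta ((i:ℕ)+1) (i:ℕ) := by
      norm_num
    simp only [ContinuousLinearMap.add_apply, ContinuousLinearMap.sub_apply,
      ContinuousLinearMap.smul_apply, prj_apply,
      ContinuousLinearMap.zero_apply, smul_eq_mul, hvi, hvm, hvq, e2, e1]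
    ring

/-- Triangular structure of the iterated Lie brackets: on `ℝ_{++}^n`, `b^k_j(x) = 0` for
`j > k` and `b^k_k(x) = σ₁x₁ Π_{i=2}^{k} ã_{i,i−1}x_i`. -/
theorem stmt16 (n : ℕ) (hn : 2 ≤ n) (ta : ℕ → ℕ → ℝ) (σ1 : ℝ)
    (hi0 : ∀ i, 2 ≤ i → i ≤ n → 0 < ta i 0)
    (h11 : 0 < ta 1 1)
    (hii : ∀ i, 2 ≤ i → i ≤ n → 0 ≤ ta i i)
    (hlow : ∀ i, 2 ≤ i → i ≤ n → 0 < ta i (i - 1))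
    (hup : ∀ i, 1 ≤ i → i ≤ n - 1 → 0 < ta i (i + 1)) :
    ∀ x : Fin n → ℝ, (∀ i, 0 < x i) →
      ∀ k, 1 ≤ k → ∀ hk : k ≤ n,
        (∀ j : Fin n, k < (j : ℕ) + 1 → bF n ta σ1 k x j = 0) ∧
        bF n ta σ1 k x ⟨k - 1, by omega⟩ =
          σ1 * x ⟨0, by omega⟩ * ∏ i ∈ Finset.Icc 2 k, ta i (i - 1) * toFun n x i := by
  suffices H : ∀ k, ∀ (hk1 : 1 ≤ k) (hk2 : k ≤ n), ∀ x : Fin n → ℝ,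
      (∀ j : Fin n, k < (j : ℕ) + 1 → bF n ta σ1 k x j = 0) ∧
      bF n ta σ1 k x ⟨k - 1, by omega⟩ =
        σ1 * x ⟨0, by omega⟩ * ∏ i ∈ Finset.Icc 2 k, ta i (i - 1) * toFun n x i by
    intro x hx k hk1 hk2
    exact H k hk1 hk2 x
  intro k hk1
  induction k, hk1 using Nat.le_induction with
  | base =>
    intro hk2 x
    constructor
    · intro j hj
      show A1 n σ1 x j = 0
      simp only [A1]
      rw [if_neg (by omega)]
    · show A1 n σ1 x ⟨0, by omega⟩ = _
      rw [Finset.Icc_eq_empty (by omega : ¬ (2:ℕ) ≤ 1), Finset.prod_empty]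
      simp only [A1, Fin.val_mk, if_true, if_pos]
      ring
  | succ k hk ih =>
    intro hk2 x
    have ihk := ih (by omega)
    obtain ⟨m, rfl⟩ : ∃ m, k = m + 1 := ⟨k - 1, by omega⟩
    have hbW : ∀ j : Fin n, DifferentiableAt ℝ (fun y => A0 n ta y j) x := fun j =>
      ((contDiff_pi.1 (A0_smooth n ta) j).differentiable (by simp)).differentiableAt
    have hbV : ∀ j : Fin n, DifferentiableAt ℝ (fun y => bF n ta σ1 (m+1) y j) x := fun j =>
      ((contDiff_pi.1 (bF_smooth n ta σ1 (m+1)) j).differentiable (by simp)).differentiableAt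
    have hzero : ∀ (y : Fin n → ℝ) (j : Fin n), m + 1 ≤ (j : ℕ) → bF n ta σ1 (m+1) y j = 0 :=
      fun y j h => (ihk y).1 j (by omega)
    have key : ∀ (jv : ℕ) (hjn : jv < n), m + 1 ≤ jv →
        bF n ta σ1 (m+1+1) x ⟨jv, hjn⟩
          = x ⟨jv, hjn⟩ * (ta (jv + 1) jv * bF n ta σ1 (m+1) x ⟨jv - 1, by omega⟩) := by
      intro jv hjn hj
      show (fderiv ℝ (A0 n ta) x (bF n ta σ1 (m+1) x)
          - fderiv ℝ (bF n ta σ1 (m+1)) x (A0 n ta x)) ⟨jv, hjn⟩ = _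
      rw [Pi.sub_apply]
      rw [fderiv_comp_apply _ x _ hbW ⟨jv, hjn⟩, fderiv_comp_apply _ x _ hbV ⟨jv, hjn⟩]
      rw [show (fun y => bF n ta σ1 (m+1) y ⟨jv, hjn⟩) = (fun _ => (0:ℝ)) from
        funext fun y => hzero y ⟨jv, hjn⟩ hj]
      rw [fderiv_const_apply, ContinuousLinearMap.zero_apply, sub_zero]
      rw [A0_fderiv_apply n ta x _ ⟨jv, hjn⟩ (by show 1 ≤ jv; omega)
        (fun p hp => hzero x p (le_trans hj hp))]
    constructor
    · intro j hj
      have hkey := key (j : ℕ) j.isLt (by omega)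
      rw [Fin.eta] at hkey
      rw [hkey, hzero x ⟨(j:ℕ) - 1, by omega⟩ (by show m + 1 ≤ (j:ℕ) - 1; omega)]
      ring
    · show bF n ta σ1 (m+1+1) x ⟨m+1, by omega⟩ = _
      rw [key (m+1) (by omega) le_rfl]
      have h2 := (ihk x).2
      rw [show (⟨m+1-1, by omega⟩ : Fin n) = ⟨(m+1) - 1, by omega⟩ from rfl] at h2
      rw [h2]
      rw [Finset.prod_Icc_succ_top (by omega : 2 ≤ m + 1 + 1)]
      rw [toFun_eq n x (m+1+1) (by omega) (by omega)]
      rw [show (⟨m+1+1-1, by omega⟩ : Fin n) = ⟨m+1, by omega⟩ from rfl]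
      simp only [Nat.add_sub_cancel]
      ring
end
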